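/- arXiv:math/0603063 — 3 statements merged into one kernel-verified Lean document; each statement's English description precedes it below -/
import Mathlib

section
/- Let U and V be Banach spaces with normalized 1-unconditional bases (u_i) and (v_i). For an infinite subset N ⊂ ℕ let U^(N) and V^(N) denote the closed linear spans of (u_i)_{i∈N} and (v_i)_{i∈N}. If C ≥ 1 and a Banach space X satisfies C-(V,U)-tree estimates, then X also satisfies C-(V^(N),U^(N))-tree estimates (with respect to the 1-unconditional bases (v_i)_{i∈N} and (u_i)_{i∈N}) for every infinite N ⊂ ℕ. -/
open Filter Topology
open scoped ENNReal

noncomputable section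

/-- A real Banach space is *reflexive* if the canonical inclusion into its double dual is
surjective. -/
def IsReflexiveSpace (X : Type*) [NormedAddCommGroup X] [NormedSpace ℝ X] : Prop :=
  Function.Surjective (NormedSpace.inclusionInDoubleDual ℝ X)

section Sequences

variable {E F V U : Type*}
variable [NormedAddCommGroup E] [NormedSpace ℝ E] [NormedAddCommGroup F] [NormedSpace ℝ F]
variable [NormedAddCommGroup V] [NormedSpace ℝ V] [NormedAddCommGroup U] [NormedSpace ℝ U]

/-- `(f i)` `C`-dominates `(e i)`: `‖∑ aᵢ eᵢ‖ ≤ C ‖∑ aᵢ fᵢ‖` for all finitely supported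
real scalar sequences `a`. -/
def Dominates (C : ℝ) (f : ℕ → F) (e : ℕ → E) : Prop :=
  ∀ a : ℕ →₀ ℝ, ‖a.sum fun i c => c • e i‖ ≤ C * ‖a.sum fun i c => c • f i‖

/-- `(f i)_{i<k}` `C`-dominates `(e i)_{i<k}`. -/
def DominatesFin {k : ℕ} (C : ℝ) (f : Fin k → F) (e : Fin k → E) : Prop :=
  ∀ a : Fin k → ℝ, ‖∑ i, a i • e i‖ ≤ C * ‖∑ i, a i • f i‖

/-- The sequence `(v i)` is normalized. -/
def SeqNormalized (v : ℕ → V) : Prop := ∀ i, ‖v i‖ = 1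

/-- The sequence `(v i)` is 1-unconditional. -/
def SeqUncond (v : ℕ → V) : Prop :=
  ∀ (s : Finset ℕ) (a ε : ℕ → ℝ), (∀ i, |ε i| ≤ 1) →
    ‖∑ i ∈ s, (ε i * a i) • v i‖ ≤ ‖∑ i ∈ s, a i • v i‖

/-- The sequence `(v i)` is 1-spreading. -/
def SeqSpreading (v : ℕ → V) : Prop :=
  ∀ (s : Finset ℕ) (a : ℕ → ℝ) (n : ℕ → ℕ), StrictMono n →
    ‖∑ i ∈ s, a i • v (n i)‖ = ‖∑ i ∈ s, a i • v i‖

/-- The closed linear span of `(v i)` is the whole space. -/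
def SeqTotal (v : ℕ → V) : Prop :=
  (Submodule.span ℝ (Set.range v)).topologicalClosure = ⊤

/-- `(v i)` is a normalized 1-unconditional (Schauder) basis of `V`. -/
def Is1UncondBasis (v : ℕ → V) : Prop :=
  SeqNormalized v ∧ SeqUncond v ∧ SeqTotal v

/-- `(v i)` is a normalized 1-subsymmetric (i.e. 1-unconditional and 1-spreading) basis. -/
def Is1SubsymBasis (v : ℕ → V) : Prop :=
  Is1UncondBasis v ∧ SeqSpreading v

/-- `(b j)` is a block sequence of the basis `(v i)`: each `b j` is a nonzero finite linear
combination of the `v i`'s, and the supports are successive. -/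
def IsBlockSeqOfBasis (v : ℕ → V) (b : ℕ → V) : Prop :=
  ∃ c : ℕ → (ℕ →₀ ℝ),
    (∀ j, b j = (c j).sum fun i r => r • v i) ∧ (∀ j, b j ≠ 0) ∧
    ∀ j, ∀ i ∈ (c j).support, ∀ i' ∈ (c (j + 1)).support, i < i'

/-- The strong right shift property (SRS) of the basis `(v i)`. -/
def HasSRS (v : ℕ → V) : Prop :=
  ∃ c > (0 : ℝ), ∀ (n : ℕ) (a : ℕ →₀ ℝ),
    c * ‖a.sum fun i r => r • v i‖ ≤ ‖a.sum fun i r => r • v (i + n)‖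

/-- The weak left shift property (WLS) of the basis `(v i)`. -/
def HasWLS (v : ℕ → V) : Prop :=
  ∃ d > (0 : ℝ), ∀ m : ℕ, ∃ L : ℕ, m ≤ L ∧ ∀ k ≤ m, ∀ a : ℕ →₀ ℝ, (∀ i ≤ L, a i = 0) →
    ∀ b : ℕ →₀ ℝ, (∀ j, b j = a (j + k)) →
      d * ‖a.sum fun i r => r • v i‖ ≤ ‖b.sum fun i r => r • v i‖

end Sequences

section Trees

variable {X V U : Type*} [NormedAddCommGroup X] [NormedSpace ℝ X]
variable [NormedAddCommGroup V] [NormedSpace ℝ V] [NormedAddCommGroup U] [NormedSpace ℝ U]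

/-- The branch of the tree `(x_α)` (indexed by finite strictly increasing lists of naturals)
along the strictly increasing sequence `n`. -/
def TreeBranch (x : List ℕ → X) (n : ℕ → ℕ) : ℕ → X := fun i => x ((List.range (i + 1)).map n)

/-- The branch of a tree of length `k` along the strictly increasing sequence `n`. -/
def TreeBranchFin (k : ℕ) (x : List ℕ → X) (n : ℕ → ℕ) : Fin k → X :=
  fun i => x ((List.range ((i : ℕ) + 1)).map n)

/-- `x` is a normalized weakly null tree (of infinite length): every member indexed by a
strictly increasing list has norm one, and every node is weakly null. -/
def IsNWNTree (x : List ℕ → X) : Prop :=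
  (∀ l : List ℕ, l.Pairwise (· < ·) → ‖x l‖ = 1) ∧
  ∀ l : List ℕ, l.Pairwise (· < ·) → ∀ f : StrongDual ℝ X,
    Tendsto (fun m => f (x (l ++ [m]))) atTop (nhds 0)

/-- `x` is a normalized weakly null tree of length `k`. -/
def IsNWNTreeLen (k : ℕ) (x : List ℕ → X) : Prop :=
  (∀ l : List ℕ, l.Pairwise (· < ·) → l.length ≤ k → ‖x l‖ = 1) ∧
  ∀ l : List ℕ, l.Pairwise (· < ·) → l.length < k → ∀ f : StrongDual ℝ X,
    Tendsto (fun m => f (x (l ++ [m]))) atTop (nhds 0)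

/-- `X` satisfies `C`-`V`-lower tree estimates w.r.t. the basis `(v i)`. -/
def LowerTreeEst (X : Type*) [NormedAddCommGroup X] [NormedSpace ℝ X]
    {V : Type*} [NormedAddCommGroup V] [NormedSpace ℝ V] (C : ℝ) (v : ℕ → V) : Prop :=
  ∀ x : List ℕ → X, IsNWNTree x → ∃ n : ℕ → ℕ, StrictMono n ∧ Dominates C (TreeBranch x n) v

/-- `X` satisfies `C`-`U`-upper tree estimates w.r.t. the basis `(u i)`. -/
def UpperTreeEst (X : Type*) [NormedAddCommGroup X] [NormedSpace ℝ X]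
    {U : Type*} [NormedAddCommGroup U] [NormedSpace ℝ U] (C : ℝ) (u : ℕ → U) : Prop :=
  ∀ x : List ℕ → X, IsNWNTree x → ∃ n : ℕ → ℕ, StrictMono n ∧ Dominates C u (TreeBranch x n)

/-- `X` satisfies asymptotic `C`-`V`-lower tree estimates. -/
def AsympLowerTreeEst (X : Type*) [NormedAddCommGroup X] [NormedSpace ℝ X]
    {V : Type*} [NormedAddCommGroup V] [NormedSpace ℝ V] (C : ℝ) (v : ℕ → V) : Prop :=
  ∀ (k : ℕ) (x : List ℕ → X), IsNWNTreeLen k x →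
    ∃ n : ℕ → ℕ, StrictMono n ∧ DominatesFin C (TreeBranchFin k x n) fun i : Fin k => v i

/-- `X` satisfies asymptotic `C`-`U`-upper tree estimates. -/
def AsympUpperTreeEst (X : Type*) [NormedAddCommGroup X] [NormedSpace ℝ X]
    {U : Type*} [NormedAddCommGroup U] [NormedSpace ℝ U] (C : ℝ) (u : ℕ → U) : Prop :=
  ∀ (k : ℕ) (x : List ℕ → X), IsNWNTreeLen k x →
    ∃ n : ℕ → ℕ, StrictMono n ∧ DominatesFin C (fun i : Fin k => u i) (TreeBranchFin k x n)

end Trees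

/-- A finite-dimensional decomposition (FDD) of `Z`: a sequence of finite-dimensional
subspaces together with the corresponding continuous coordinate projections, such that every
`z ∈ Z` is the norm-convergent sum of its coordinates. -/
structure FDD (Z : Type*) [NormedAddCommGroup Z] [NormedSpace ℝ Z] where
  E : ℕ → Submodule ℝ Z
  finDim : ∀ n, FiniteDimensional ℝ (E n)
  proj : ℕ → Z →L[ℝ] Z
  mem_proj : ∀ n z, proj n z ∈ E n
  proj_self : ∀ n, ∀ z ∈ E n, proj n z = z
  proj_other : ∀ m n, m ≠ n → ∀ z ∈ E n, proj m z = 0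
  tendsto_partialSum :
    ∀ z : Z, Tendsto (fun N => ∑ n ∈ Finset.range N, proj n z) atTop (nhds z)

section FDDdefs

variable {Z V U : Type*} [NormedAddCommGroup Z] [NormedSpace ℝ Z]
variable [NormedAddCommGroup V] [NormedSpace ℝ V] [NormedAddCommGroup U] [NormedSpace ℝ U]

/-- The support of `z` with respect to the FDD `F`. -/
def FDD.supp (F : FDD Z) (z : Z) : Set ℕ := {i | F.proj i z ≠ 0}

/-- `(z j)` is a block sequence of the FDD `F`. -/
def FDD.IsBlockSeq (F : FDD Z) (z : ℕ → Z) : Prop :=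
  (∀ j, z j ≠ 0 ∧ (F.supp (z j)).Finite) ∧
  ∀ j, ∀ i ∈ F.supp (z j), ∀ i' ∈ F.supp (z (j + 1)), i < i'

/-- The FDD `F` is shrinking: every bounded block sequence is weakly null. -/
def FDD.Shrinking (F : FDD Z) : Prop :=
  ∀ z : ℕ → Z, F.IsBlockSeq z → (∃ M : ℝ, ∀ j, ‖z j‖ ≤ M) →
    ∀ f : StrongDual ℝ Z, Tendsto (fun j => f (z j)) atTop (nhds 0)

/-- The projection onto the coordinates in `[a,b)`. -/
def FDD.projIco (F : FDD Z) (a b : ℕ) : Z →L[ℝ] Z := ∑ i ∈ Finset.Ico a b, F.proj i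

/-- The FDD `F` is bimonotone. -/
def FDD.Bimonotone (F : FDD Z) : Prop := ∀ (a b : ℕ) (z : Z), ‖F.projIco a b z‖ ≤ ‖z‖

/-- `G` is a blocking of the FDD `F`. -/
def FDD.IsBlocking (G F : FDD Z) : Prop :=
  ∃ k : ℕ → ℕ, k 0 = 0 ∧ StrictMono k ∧
    ∀ n, (G.proj n : Z →L[ℝ] Z) = ∑ i ∈ Finset.Ico (k n) (k (n + 1)), F.proj i

/-- The FDD `F` satisfies `C`-`V`-lower estimates in `Z`. -/
def FDD.LowerEst (F : FDD Z) (C : ℝ) (v : ℕ → V) : Prop :=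
  ∀ z : ℕ → Z, F.IsBlockSeq z → (∀ j, ‖z j‖ = 1) → Dominates C z v

/-- The FDD `F` satisfies `C`-`U`-upper estimates in `Z`. -/
def FDD.UpperEst (F : FDD Z) (C : ℝ) (u : ℕ → U) : Prop :=
  ∀ z : ℕ → Z, F.IsBlockSeq z → (∀ j, ‖z j‖ = 1) → Dominates C u z

/-- `(x i)_{i<n}` is a block sequence of `(E i)_{i≥n}` (of length `n`) of the FDD `F`. -/
def FDD.IsAsympBlock (F : FDD Z) (n : ℕ) (x : Fin n → Z) : Prop :=
  (∀ i, x i ≠ 0 ∧ (F.supp (x i)).Finite ∧ ∀ j ∈ F.supp (x i), n ≤ j) ∧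
  ∀ i i' : Fin n, i < i' → ∀ j ∈ F.supp (x i), ∀ j' ∈ F.supp (x i'), j < j'

/-- The FDD `F` satisfies asymptotic `C`-`V`-lower estimates in `Z`. -/
def FDD.AsympLowerEst (F : FDD Z) (C : ℝ) (v : ℕ → V) : Prop :=
  ∀ (n : ℕ) (x : Fin n → Z), F.IsAsympBlock n x →
    C⁻¹ * ‖∑ i, ‖x i‖ • v (i : ℕ)‖ ≤ ‖∑ i, x i‖

/-- The FDD `F` satisfies asymptotic `C`-`U`-upper estimates in `Z`. -/
def FDD.AsympUpperEst (F : FDD Z) (C : ℝ) (u : ℕ → U) : Prop :=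
  ∀ (n : ℕ) (x : Fin n → Z), F.IsAsympBlock n x →
    ‖∑ i, x i‖ ≤ C * ‖∑ i, ‖x i‖ • u (i : ℕ)‖

/-- The support of a functional `f` with respect to the dual FDD `(E_i^*)`. -/
def FDD.dualSupp (F : FDD Z) (f : StrongDual ℝ Z) : Set ℕ :=
  {i | f.comp (F.proj i) ≠ 0}

/-- `(g j)` is a block sequence of the dual FDD `(E_i^*)` in `Z^(*)`. -/
def FDD.IsDualBlockSeq (F : FDD Z) (g : ℕ → StrongDual ℝ Z) : Prop :=
  (∀ j, g j ≠ 0 ∧ (F.dualSupp (g j)).Finite) ∧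
  ∀ j, ∀ i ∈ F.dualSupp (g j), ∀ i' ∈ F.dualSupp (g (j + 1)), i < i'

/-- The space `c₀₀(⊕ E_i)` of finitely supported vectors of the FDD `F`. -/
def FDD.finVectors (F : FDD Z) : Submodule ℝ Z where
  carrier := {z | (F.supp z).Finite}
  zero_mem' := by
    refine Set.Finite.subset Set.finite_empty ?_
    intro i hi
    simp only [FDD.supp, Set.mem_setOf_eq, map_zero, ne_eq, not_true_eq_false] at hi
  add_mem' := by
    intro a b ha hb
    refine Set.Finite.subset (Set.Finite.union ha hb) ?_
    intro i hi
    simp only [FDD.supp, Set.mem_setOf_eq, Set.mem_union] at hi ⊢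
    by_contra hcon
    push_neg at hcon
    rw [map_add, hcon.1, hcon.2, add_zero] at hi
    exact hi rfl
  smul_mem' := by
    intro c a ha
    refine Set.Finite.subset ha ?_
    intro i hi
    simp only [FDD.supp, Set.mem_setOf_eq] at hi ⊢
    intro h0
    rw [map_smul, h0, smul_zero] at hi
    exact hi rfl

/-- The quantity `‖∑_{j<k} ‖P_{[n_j, n_{j+1})} z‖ v_j‖` appearing in the definition of the
norm of `Z_V(E)`. -/
def zvBlockSum (F : FDD Z) (v : ℕ → V) (z : Z) (k : ℕ) (n : ℕ → ℕ) : ℝ :=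
  ‖∑ j ∈ Finset.range k, ‖F.projIco (n j) (n (j + 1)) z‖ • v j‖

/-- Admissibility of the data `(k, n)` in the definition of the norm of `Z_V(E)`. -/
def IsZVAdmissible (k : ℕ) (n : ℕ → ℕ) : Prop := 1 ≤ k ∧ n 0 = 0 ∧ StrictMono n

/-- The norm of the space `Z_V(E)`. -/
def zvNorm (F : FDD Z) (v : ℕ → V) (z : Z) : ℝ :=
  sSup {r | ∃ k n, IsZVAdmissible k n ∧ r = zvBlockSum F v z k n}

end FDDdefs

/-- A bundled Banach space. -/
structure BanachPack where
  carrier : Type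
  [grp : NormedAddCommGroup carrier]
  [nsp : NormedSpace ℝ carrier]
  [cpl : CompleteSpace carrier]

attribute [instance] BanachPack.grp BanachPack.nsp BanachPack.cpl

/-- A bundled Banach space with an FDD. -/
structure BanachFDDPack where
  carrier : Type
  [grp : NormedAddCommGroup carrier]
  [nsp : NormedSpace ℝ carrier]
  [cpl : CompleteSpace carrier]
  fdd : FDD carrier

attribute [instance] BanachFDDPack.grp BanachFDDPack.nsp BanachFDDPack.cpl

section Tsirelson

variable {V : Type*} [NormedAddCommGroup V] [NormedSpace ℝ V]

/-- The auxiliary norms `‖·‖_{ℓ, T(V,γ)}` on `c₀₀ = ℕ →₀ ℝ` used in the definition of the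
Tsirelson space `T(V,γ)` associated to `V` and `γ`. -/
def tsNormAux (v : ℕ → V) (γ : ℝ) : ℕ → (ℕ →₀ ℝ) → ℝ
  | 0 => fun x => ⨆ i, |x i|
  | ℓ + 1 => fun x =>
      max (tsNormAux v γ ℓ x)
        (sSup {r | ∃ (n : ℕ) (A : ℕ → Finset ℕ), 1 ≤ n ∧
          (∀ i < n, ∀ a ∈ A i, n ≤ a) ∧
          (∀ i j, i < j → j < n → ∀ a ∈ A i, ∀ b ∈ A j, a < b) ∧
          r = γ * ‖∑ i ∈ Finset.range n, tsNormAux v γ ℓ (x.filter (· ∈ A i)) • v i‖})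

/-- The norm of the Tsirelson space `T(V,γ)` on `c₀₀ = ℕ →₀ ℝ`. -/
def tsNorm (v : ℕ → V) (γ : ℝ) (x : ℕ →₀ ℝ) : ℝ := ⨆ ℓ, tsNormAux v γ ℓ x

end Tsirelson

/-- The dual norm, on `c₀₀ = ℕ →₀ ℝ`, of a norm `N` on `c₀₀`. -/
def dualNormCoo (N : (ℕ →₀ ℝ) → ℝ) (b : ℕ →₀ ℝ) : ℝ :=
  sSup {r | ∃ x : ℕ →₀ ℝ, N x ≤ 1 ∧ r = x.sum fun i c => c * b i}

/-- The `ℓ_p` norm of a finite real sequence (`p = ∞` gives the max norm). -/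
def lpSum (p : ℝ≥0∞) {k : ℕ} (a : Fin k → ℝ) : ℝ :=
  if p = ∞ then ⨆ i, |a i| else (∑ i, |a i| ^ p.toReal) ^ (1 / p.toReal)


section LpEstimates

variable {X Z : Type*} [NormedAddCommGroup X] [NormedSpace ℝ X]
variable [NormedAddCommGroup Z] [NormedSpace ℝ Z]

/-- `X` satisfies asymptotic `C`-`ℓ_p`-lower tree estimates. -/
def AsympLpLowerTreeEst (X : Type*) [NormedAddCommGroup X] [NormedSpace ℝ X]
    (C : ℝ) (p : ℝ≥0∞) : Prop :=
  ∀ (k : ℕ) (x : List ℕ → X), IsNWNTreeLen k x →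
    ∃ n : ℕ → ℕ, StrictMono n ∧ ∀ a : Fin k → ℝ,
      C⁻¹ * lpSum p a ≤ ‖∑ i, a i • TreeBranchFin k x n i‖

/-- `X` satisfies asymptotic `C`-`ℓ_q`-upper tree estimates. -/
def AsympLpUpperTreeEst (X : Type*) [NormedAddCommGroup X] [NormedSpace ℝ X]
    (C : ℝ) (q : ℝ≥0∞) : Prop :=
  ∀ (k : ℕ) (x : List ℕ → X), IsNWNTreeLen k x →
    ∃ n : ℕ → ℕ, StrictMono n ∧ ∀ a : Fin k → ℝ,
      ‖∑ i, a i • TreeBranchFin k x n i‖ ≤ C * lpSum q a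

/-- The FDD `F` satisfies asymptotic `C`-`ℓ_p`-lower estimates. -/
def FDD.AsympLpLowerEst (F : FDD Z) (C : ℝ) (p : ℝ≥0∞) : Prop :=
  ∀ (n : ℕ) (x : Fin n → Z), F.IsAsympBlock n x →
    C⁻¹ * lpSum p (fun i => ‖x i‖) ≤ ‖∑ i, x i‖

/-- The FDD `F` satisfies asymptotic `C`-`ℓ_q`-upper estimates. -/
def FDD.AsympLpUpperEst (F : FDD Z) (C : ℝ) (q : ℝ≥0∞) : Prop :=
  ∀ (n : ℕ) (x : Fin n → Z), F.IsAsympBlock n x →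
    ‖∑ i, x i‖ ≤ C * lpSum q (fun i => ‖x i‖)

end LpEstimates

end

/-! Spread a normalized weakly null tree `x` out along `e`: level `e i` of the new tree `y`
carries level `i` of `x`, and every node of `y` is a node of `x`, so `y` is again normalized
and weakly null. The branch of `y` along `n`, read at the levels `e i`, is the branch of `x`
along `n ∘ e`; hence a domination estimate between the branch of `y` and `(v i)` restricts to
one between the branch of `x` and `(v (e i))`. -/

namespace List

variable {α β : Type*} (p : ℕ → Prop) [DecidablePred p]

def keepIndices (l : List α) : List α :=
  (l.zipIdx.filter fun q => p q.2).map Prod.fst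

theorem keepIndices_sublist (l : List α) : (l.keepIndices p).Sublist l := by
  simpa only [keepIndices, zipIdx_map_fst] using
    (filter_sublist (l := l.zipIdx) (p := fun q => decide (p q.2))).map Prod.fst

theorem keepIndices_map (f : α → β) (l : List α) :
    (l.map f).keepIndices p = (l.keepIndices p).map f := by
  simp [keepIndices, zipIdx_map, filter_map, Function.comp_def]

theorem zipIdx_range (k : ℕ) : (range k).zipIdx = (range k).map fun j => (j, j) := by
  induction k with
  | zero => rfl
  | succ k ih => simp [range_succ, zipIdx_append, ih]

theorem keepIndices_range (k : ℕ) : (range k).keepIndices p = (range k).filter p := by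
  simp [keepIndices, zipIdx_range, filter_map, Function.comp_def]

theorem keepIndices_range_of_strictMono {e : ℕ → ℕ} (he : StrictMono e)
    [DecidablePred (· ∈ Set.range e)] (i : ℕ) :
    (range (e i)).keepIndices (· ∈ Set.range e) = (range i).map e := by
  rw [keepIndices_range]
  refine Pairwise.eq_of_mem_iff (r := (· < ·)) (pairwise_lt_range.filter _)
    (pairwise_map.2 (pairwise_lt_range.imp fun h => he h)) fun k => ?_
  simp only [mem_filter, mem_range, decide_eq_true_eq, mem_map]
  constructor
  · rintro ⟨hk, j, rfl⟩
    exact ⟨j, he.lt_iff_lt.1 hk, rfl⟩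
  · rintro ⟨j, hj, rfl⟩
    exact ⟨he hj, j, rfl⟩

end List

section SpreadTree

variable {X : Type*}

open Classical in
noncomputable def spreadTree (e : ℕ → ℕ) (x : List ℕ → X) (l : List ℕ) : X :=
  x (l.dropLast.keepIndices (· ∈ Set.range e) ++ [l.getLastD 0])

open Classical in
theorem spreadTree_concat (e : ℕ → ℕ) (x : List ℕ → X) (l : List ℕ) (m : ℕ) :
    spreadTree e x (l ++ [m]) = x (l.keepIndices (· ∈ Set.range e) ++ [m]) := by
  simp only [spreadTree, List.dropLast_concat, List.getLastD_concat]

open Classical in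
theorem IsNWNTree.spreadTree [NormedAddCommGroup X] [NormedSpace ℝ X] {x : List ℕ → X}
    (hx : IsNWNTree x) (e : ℕ → ℕ) : IsNWNTree (spreadTree e x) := by
  refine ⟨fun l hl => ?_, fun l hl f => ?_⟩
  · obtain rfl | ⟨l, m, rfl⟩ := l.eq_nil_or_concat
    · exact hx.1 [0] (List.pairwise_singleton _ _)
    · rw [List.concat_eq_append] at hl ⊢
      rw [spreadTree_concat]
      exact hx.1 _ (hl.sublist ((List.keepIndices_sublist _ l).append (List.Sublist.refl _)))
  · simp only [spreadTree_concat]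
    exact hx.2 _ (hl.sublist (List.keepIndices_sublist _ l)) f

open Classical in
theorem treeBranch_spreadTree_comp {e : ℕ → ℕ} (he : StrictMono e) (x : List ℕ → X)
    (n : ℕ → ℕ) : TreeBranch (spreadTree e x) n ∘ e = TreeBranch x (n ∘ e) := by
  funext i
  simp only [Function.comp_apply, TreeBranch, List.range_succ, List.map_append, List.map_cons,
    List.map_nil, spreadTree_concat, List.keepIndices_map, List.keepIndices_range_of_strictMono he,
    List.map_map]

end SpreadTree

section Restriction

variable {X E F : Type*} [NormedAddCommGroup X] [NormedSpace ℝ X]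
variable [NormedAddCommGroup E] [NormedSpace ℝ E] [NormedAddCommGroup F] [NormedSpace ℝ F]

theorem Dominates.comp {C : ℝ} {f : ℕ → F} {g : ℕ → E} (h : Dominates C f g) {e : ℕ → ℕ}
    (he : Function.Injective e) : Dominates C (f ∘ e) (g ∘ e) := fun a => by
  simpa only [Finsupp.sum_embDomain, Function.Embedding.coeFn_mk, Function.comp_apply] using
    h (a.embDomain ⟨e, he⟩)

theorem LowerTreeEst.comp {C : ℝ} {v : ℕ → E} (h : LowerTreeEst X C v) {e : ℕ → ℕ}
    (he : StrictMono e) : LowerTreeEst X C (v ∘ e) := fun x hx => by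
  obtain ⟨n, hn, hdom⟩ := h _ (hx.spreadTree e)
  refine ⟨n ∘ e, hn.comp he, ?_⟩
  simpa only [treeBranch_spreadTree_comp he] using hdom.comp he.injective

theorem UpperTreeEst.comp {C : ℝ} {u : ℕ → E} (h : UpperTreeEst X C u) {e : ℕ → ℕ}
    (he : StrictMono e) : UpperTreeEst X C (u ∘ e) := fun x hx => by
  obtain ⟨n, hn, hdom⟩ := h _ (hx.spreadTree e)
  refine ⟨n ∘ e, hn.comp he, ?_⟩
  simpa only [treeBranch_spreadTree_comp he] using hdom.comp he.injective

end Restriction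

theorem statement0_general {X U V : Type*}
    [NormedAddCommGroup X] [NormedSpace ℝ X]
    [NormedAddCommGroup U] [NormedSpace ℝ U]
    [NormedAddCommGroup V] [NormedSpace ℝ V]
    (u : ℕ → U) (v : ℕ → V)
    (C : ℝ)
    (hlow : LowerTreeEst X C v) (hup : UpperTreeEst X C u)
    (e : ℕ → ℕ) (he : StrictMono e) :
    LowerTreeEst X C (fun i => v (e i)) ∧ UpperTreeEst X C (fun i => u (e i)) :=
  ⟨hlow.comp he, hup.comp he⟩

/-- If `X` satisfies `C`-`(V,U)`-tree estimates then it satisfies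
`C`-`(V^(N),U^(N))`-tree estimates for every infinite `N ⊆ ℕ` (encoded by a strictly
increasing enumeration `e : ℕ → ℕ`). -/
theorem statement0 {X U V : Type*}
    [NormedAddCommGroup X] [NormedSpace ℝ X] [CompleteSpace X]
    [NormedAddCommGroup U] [NormedSpace ℝ U] [CompleteSpace U]
    [NormedAddCommGroup V] [NormedSpace ℝ V] [CompleteSpace V]
    (u : ℕ → U) (v : ℕ → V) (hu : Is1UncondBasis u) (hv : Is1UncondBasis v)
    (C : ℝ) (hC : 1 ≤ C)
    (hlow : LowerTreeEst X C v) (hup : UpperTreeEst X C u)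
    (e : ℕ → ℕ) (he : StrictMono e) :
    LowerTreeEst X C (fun i => v (e i)) ∧ UpperTreeEst X C (fun i => u (e i)) :=
  statement0_general u v C hlow hup e he
end

section
/- Let U and V be Banach spaces with normalized 1-unconditional bases (u_i) and (v_i). Assume that X is a Banach space with the property that every normalized weakly null tree in X has a branch which dominates (v_i) and a branch which is dominated by (u_i). Then there exists a single constant C ≥ 1 such that X satisfies C-(V,U)-tree estimates. -/
open Filter Topology
open scoped ENNReal

/-!
Write `P(d, C)` for: every normalized weakly null tree has a branch satisfying the
`C`-estimate for all coefficient sequences supported in `[d, ∞)`.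

Some `P(d, d + 1)` holds. Otherwise choose, for each `d`, a tree all of whose branches violate
the `(d + 1)`-estimate on `[d, ∞)`, and splice these trees along every branch: follow the tree
chosen for level `D` from level `D` on until its branch has exhibited a violation, then start
again with the tree chosen for the current level. Every branch of the spliced tree violates
arbitrarily large constants, against the hypothesis.

Then `P(d + 1, C)` gives `P(d, C')`. For the upper estimate this is the triangle inequality and
1-unconditionality of `(u i)`. For the lower estimate, first prune the tree so that a norming
functional of the `d`-th vector of a branch almost annihilates all later ones; it then recovers
the coefficient `a d` up to a small error, which controls the missing term.
-/

open Finsupp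

section Dominates

variable {E F : Type*} [NormedAddCommGroup E] [NormedSpace ℝ E]
  [NormedAddCommGroup F] [NormedSpace ℝ F]

def DominatesAt (C : ℝ) (f : ℕ → F) (e : ℕ → E) (a : ℕ →₀ ℝ) : Prop :=
  ‖linearCombination ℝ e a‖ ≤ C * ‖linearCombination ℝ f a‖

theorem DominatesAt.mono {C C' : ℝ} {f : ℕ → F} {e : ℕ → E} {a : ℕ →₀ ℝ}
    (h : DominatesAt C f e a) (hC : C ≤ C') : DominatesAt C' f e a :=
  h.trans (mul_le_mul_of_nonneg_right hC (norm_nonneg _))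

theorem Dominates.mono {C C' : ℝ} {f : ℕ → F} {e : ℕ → E}
    (h : Dominates C f e) (hC : C ≤ C') : Dominates C' f e :=
  fun a => DominatesAt.mono (h a) hC

theorem linearCombination_congr_of_eqOn_support {f g : ℕ → E} {a : ℕ →₀ ℝ}
    (h : ∀ i ∈ a.support, f i = g i) : linearCombination ℝ f a = linearCombination ℝ g a :=
  Finsupp.sum_congr fun i hi => by simp only [h i hi]

theorem DominatesAt.congr_left {C : ℝ} {f f' : ℕ → F} {e : ℕ → E} {a : ℕ →₀ ℝ}
    (h : DominatesAt C f e a) (hf : ∀ i ∈ a.support, f i = f' i) : DominatesAt C f' e a := by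
  rwa [DominatesAt, ← linearCombination_congr_of_eqOn_support hf]

theorem DominatesAt.congr_right {C : ℝ} {f : ℕ → F} {e e' : ℕ → E} {a : ℕ →₀ ℝ}
    (h : DominatesAt C f e a) (he : ∀ i ∈ a.support, e i = e' i) : DominatesAt C f e' a := by
  rwa [DominatesAt, ← linearCombination_congr_of_eqOn_support he]

theorem linearCombination_eq_erase_add (f : ℕ → E) (a : ℕ →₀ ℝ) (d : ℕ) :
    linearCombination ℝ f a = linearCombination ℝ f (a.erase d) + a d • f d := by
  conv_lhs => rw [← erase_add_single d a]
  rw [map_add, linearCombination_single]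

end Dominates

theorem succ_le_of_mem_support_erase {a : ℕ →₀ ℝ} {d : ℕ} (ha : ∀ i ∈ a.support, d ≤ i) :
    ∀ i ∈ (a.erase d).support, d + 1 ≤ i := fun i hi => by
  rw [Finsupp.support_erase] at hi
  exact lt_of_le_of_ne (ha i (Finset.mem_of_mem_erase hi)) (Finset.ne_of_mem_erase hi).symm

section Unconditional

variable {V : Type*} [NormedAddCommGroup V] [NormedSpace ℝ V] {v : ℕ → V}

theorem SeqUncond.norm_linearCombination_le (hv : SeqUncond v) {a b : ℕ →₀ ℝ}
    (hba : ∀ i, |b i| ≤ |a i|) : ‖linearCombination ℝ v b‖ ≤ ‖linearCombination ℝ v a‖ := by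
  have hsupp : b.support ⊆ a.support := fun i hi => by
    have := hba i
    simp only [mem_support_iff] at hi ⊢
    intro hai
    rw [hai, abs_zero] at this
    exact hi (abs_nonpos_iff.mp this)
  have hb : linearCombination ℝ v b = ∑ i ∈ a.support, (b i / a i * a i) • v i := by
    rw [linearCombination_apply, Finsupp.sum_of_support_subset b hsupp _ (by simp)]
    refine Finset.sum_congr rfl fun i hi => ?_
    rw [div_mul_cancel₀ _ (mem_support_iff.mp hi)]
  rw [hb]
  refine hv a.support a (fun i => b i / a i) fun i => ?_
  rw [abs_div]
  exact div_le_one_of_le₀ (hba i) (abs_nonneg _)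

theorem SeqUncond.abs_apply_le_norm (hv1 : SeqNormalized v) (hv : SeqUncond v)
    (a : ℕ →₀ ℝ) (j : ℕ) : |a j| ≤ ‖linearCombination ℝ v a‖ := by
  have h := hv.norm_linearCombination_le (a := a) (b := single j (a j)) fun i => by
    rcases eq_or_ne i j with rfl | hij <;> simp [*]
  rwa [linearCombination_single, norm_smul, hv1 j, mul_one, Real.norm_eq_abs] at h

end Unconditional

theorem abs_sum_le_of_abs_le_geometric {t : ℕ → ℝ} {K : ℝ} (hK : 0 ≤ K) (s : Finset ℕ)
    (ht : ∀ i ∈ s, |t i| ≤ K * 2⁻¹ ^ i) : |∑ i ∈ s, t i| ≤ 2 * K := by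
  obtain ⟨N, hN⟩ : ∃ N, s ⊆ Finset.range N :=
    ⟨s.sup id + 1, fun i hi =>
      Finset.mem_range.mpr (Nat.lt_succ_of_le (Finset.le_sup (f := id) hi))⟩
  have hgeom : ∑ i ∈ s, (2⁻¹ : ℝ) ^ i ≤ 2 :=
    (Finset.sum_le_sum_of_subset_of_nonneg hN fun i _ _ => by positivity).trans
      (by simpa [one_div] using sum_geometric_two_le N)
  calc |∑ i ∈ s, t i| ≤ ∑ i ∈ s, K * 2⁻¹ ^ i :=
        (Finset.abs_sum_le_sum_abs _ _).trans (Finset.sum_le_sum ht)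
    _ = K * ∑ i ∈ s, (2⁻¹ : ℝ) ^ i := by rw [Finset.mul_sum]
    _ ≤ 2 * K := by nlinarith

section Trees

variable {X : Type*}

def seqPrefix (n : ℕ → ℕ) (j : ℕ) : List ℕ := (List.range j).map n

theorem seqPrefix_succ (n : ℕ → ℕ) (j : ℕ) : seqPrefix n (j + 1) = seqPrefix n j ++ [n j] := by
  simp [seqPrefix, List.range_succ]

@[simp]
theorem length_seqPrefix (n : ℕ → ℕ) (j : ℕ) : (seqPrefix n j).length = j := by
  simp [seqPrefix]

theorem take_seqPrefix (n : ℕ → ℕ) {j k : ℕ} (h : j ≤ k) :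
    (seqPrefix n k).take j = seqPrefix n j := by
  simp [seqPrefix, ← List.map_take, List.take_range, Nat.min_eq_left h]

theorem getD_seqPrefix (n : ℕ → ℕ) {j k : ℕ} (h : j < k) : (seqPrefix n k).getD j 0 = n j := by
  simp [seqPrefix, List.getD_eq_getElem?_getD, h]

theorem seqPrefix_congr {n n' : ℕ → ℕ} {k : ℕ} (h : ∀ j < k, n j = n' j) :
    seqPrefix n k = seqPrefix n' k :=
  List.map_congr_left fun j hj => h j (List.mem_range.mp hj)

theorem pairwise_seqPrefix {n : ℕ → ℕ} (hn : StrictMono n) (j : ℕ) :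
    (seqPrefix n j).Pairwise (· < ·) :=
  List.Pairwise.map n (fun _ _ h => hn h) List.pairwise_lt_range

theorem treeBranch_eq (x : List ℕ → X) (n : ℕ → ℕ) (i : ℕ) :
    TreeBranch x n i = x (seqPrefix n (i + 1)) :=
  rfl

theorem treeBranch_congr (x : List ℕ → X) {n n' : ℕ → ℕ} {i : ℕ} (h : ∀ j ≤ i, n j = n' j) :
    TreeBranch x n i = TreeBranch x n' i := by
  rw [treeBranch_eq, treeBranch_eq, seqPrefix_congr fun j hj => h j (Nat.lt_succ_iff.mp hj)]

theorem IsNWNTree.norm_treeBranch [NormedAddCommGroup X] [NormedSpace ℝ X] {x : List ℕ → X}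
    (hx : IsNWNTree x) {n : ℕ → ℕ} (hn : StrictMono n) (i : ℕ) : ‖TreeBranch x n i‖ = 1 :=
  hx.1 _ (pairwise_seqPrefix hn (i + 1))

end Trees

namespace Prune

variable {X : Type*} [NormedAddCommGroup X] [NormedSpace ℝ X]
variable (x : List ℕ → X) (g : List ℕ → StrongDual ℝ X) (ε : ℝ)

open Classical in
/-- `p.sum + 1` exceeds every entry of `p`, which keeps pruned lists strictly increasing; the
second summand is a threshold beyond which `g p` is at most `ε * 2⁻¹ ^ p.length` on the
children of `p`. -/
noncomputable def offset (p : List ℕ) : ℕ :=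
  p.sum + 1 +
    if h : ∀ᶠ m in atTop, |g p (x (p ++ [m]))| ≤ ε * 2⁻¹ ^ p.length then
      (eventually_atTop.mp h).choose
    else 0

noncomputable def index (l : List ℕ) : List ℕ :=
  l.foldl (fun p m => p ++ [offset x g ε p + m]) []

theorem lt_offset {p : List ℕ} {a : ℕ} (ha : a ∈ p) : a < offset x g ε p := by
  have := List.le_sum_of_mem ha
  rw [offset]
  omega

theorem index_append_singleton (l : List ℕ) (m : ℕ) :
    index x g ε (l ++ [m]) = index x g ε l ++ [offset x g ε (index x g ε l) + m] :=
  List.foldl_concat ..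

theorem pairwise_index (l : List ℕ) : (index x g ε l).Pairwise (· < ·) := by
  induction l using List.reverseRecOn with
  | nil => exact List.Pairwise.nil
  | append_singleton l m ih =>
    rw [index_append_singleton, List.pairwise_append]
    refine ⟨ih, List.pairwise_singleton _ _, fun a ha b hb => ?_⟩
    rw [List.mem_singleton.mp hb]
    exact (lt_offset x g ε ha).trans_le (Nat.le_add_right _ _)

theorem length_index (l : List ℕ) : (index x g ε l).length = l.length := by
  induction l using List.reverseRecOn with
  | nil => rfl
  | append_singleton l m ih => simp [index_append_singleton, ih]

noncomputable def branch (n : ℕ → ℕ) (i : ℕ) : ℕ :=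
  offset x g ε (index x g ε (seqPrefix n i)) + n i

theorem index_seqPrefix (n : ℕ → ℕ) (j : ℕ) :
    index x g ε (seqPrefix n j) = seqPrefix (branch x g ε n) j := by
  induction j with
  | zero => rfl
  | succ j ih => rw [seqPrefix_succ, index_append_singleton, ih, seqPrefix_succ, branch, ih]

theorem strictMono_branch (n : ℕ → ℕ) : StrictMono (branch x g ε n) := by
  refine strictMono_nat_of_lt_succ fun i => ?_
  have hmem : branch x g ε n i ∈ index x g ε (seqPrefix n (i + 1)) := by
    rw [index_seqPrefix, seqPrefix_succ]
    exact List.mem_append_right _ (List.mem_singleton_self _)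
  exact (lt_offset x g ε hmem).trans_le (Nat.le_add_right _ _)

theorem treeBranch_comp_index (n : ℕ → ℕ) :
    TreeBranch (x ∘ index x g ε) n = TreeBranch x (branch x g ε n) :=
  funext fun i => congrArg x (index_seqPrefix x g ε n (i + 1))

variable {x}

theorem isNWNTree_comp_index (hx : IsNWNTree x) : IsNWNTree (x ∘ index x g ε) := by
  refine ⟨fun l _ => hx.1 _ (pairwise_index x g ε l), fun l _ f => ?_⟩
  have hshift : Tendsto (fun m => offset x g ε (index x g ε l) + m) atTop atTop :=
    tendsto_atTop_mono (fun m => Nat.le_add_left m _) tendsto_id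
  refine ((hx.2 _ (pairwise_index x g ε l) f).comp hshift).congr fun m => ?_
  rw [Function.comp_apply, Function.comp_apply, index_append_singleton]

theorem abs_apply_le (hx : IsNWNTree x) (hε : 0 < ε) (p : List ℕ) (hp : p.Pairwise (· < ·))
    (m : ℕ) : |g p (x (p ++ [offset x g ε p + m]))| ≤ ε * 2⁻¹ ^ p.length := by
  have hev : ∀ᶠ m in atTop, |g p (x (p ++ [m]))| ≤ ε * 2⁻¹ ^ p.length := by
    have hball := Metric.closedBall_mem_nhds (0 : ℝ) (by positivity : 0 < ε * 2⁻¹ ^ p.length)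
    filter_upwards [(hx.2 p hp (g p)).eventually hball] with m hm
    simpa [Real.dist_eq] using hm
  rw [offset, dif_pos hev]
  exact (eventually_atTop.mp hev).choose_spec _ (by omega)

theorem abs_apply_treeBranch_le (hx : IsNWNTree x) (hε : 0 < ε) (n : ℕ → ℕ) (j : ℕ) :
    |g (seqPrefix (branch x g ε n) j) (TreeBranch (x ∘ index x g ε) n j)| ≤ ε * 2⁻¹ ^ j := by
  have h := abs_apply_le g ε hx hε _ (pairwise_index x g ε (seqPrefix n j)) (n j)
  rwa [← index_append_singleton, ← seqPrefix_succ, length_index, length_seqPrefix,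
    index_seqPrefix, index_seqPrefix, ← treeBranch_eq x, ← treeBranch_comp_index] at h

end Prune

section Descent

variable {X V : Type*} [NormedAddCommGroup X] [NormedSpace ℝ X]
  [NormedAddCommGroup V] [NormedSpace ℝ V]

theorem IsNWNTree.exists_prune_almostBiorthogonal {x : List ℕ → X} (hx : IsNWNTree x) {ε : ℝ}
    (hε : 0 < ε) (d : ℕ) :
    ∃ y : List ℕ → X, IsNWNTree y ∧
      (∀ n, ∃ n', StrictMono n' ∧ TreeBranch y n = TreeBranch x n') ∧
      ∀ n, ∃ f : StrongDual ℝ X, ‖f‖ ≤ 1 ∧ f (TreeBranch y n d) = 1 ∧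
        ∀ j, d < j → |f (TreeBranch y n j)| ≤ ε * 2⁻¹ ^ j := by
  choose F hF_norm hF_apply using fun z : X => exists_dual_vector'' ℝ z
  set g : List ℕ → StrongDual ℝ X := fun p => F (x (p.take (d + 1)))
  refine ⟨x ∘ Prune.index x g ε, Prune.isNWNTree_comp_index g ε hx,
    fun n => ⟨_, Prune.strictMono_branch x g ε n, Prune.treeBranch_comp_index x g ε n⟩,
    fun n => ⟨F (TreeBranch (x ∘ Prune.index x g ε) n d), hF_norm _, ?_, fun j hj => ?_⟩⟩
  · rw [hF_apply, Prune.treeBranch_comp_index,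
      hx.norm_treeBranch (Prune.strictMono_branch x g ε n), RCLike.ofReal_one]
  · have h := Prune.abs_apply_treeBranch_le g ε hx hε n j
    rwa [show g (seqPrefix (Prune.branch x g ε n) j) = F (TreeBranch (x ∘ Prune.index x g ε) n d) by
      rw [Prune.treeBranch_comp_index, treeBranch_eq, ← take_seqPrefix _ hj]] at h

theorem dominatesAt_of_almostBiorthogonal {v : ℕ → V} (hv1 : SeqNormalized v)
    (hv2 : SeqUncond v) {C : ℝ} (hC : 0 < C) {γ : ℕ → X} {d : ℕ} (hγ : ‖γ d‖ = 1)
    {f : StrongDual ℝ X} (hf : ‖f‖ ≤ 1) (hfd : f (γ d) = 1)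
    (hfj : ∀ j, d < j → |f (γ j)| ≤ (4 * C)⁻¹ * 2⁻¹ ^ j) {a : ℕ →₀ ℝ}
    (ha : ∀ i ∈ a.support, d ≤ i) (h : DominatesAt C γ v (a.erase d)) :
    DominatesAt (4 * C + 3) γ v a := by
  set a' := a.erase d
  set S := ‖linearCombination ℝ γ a‖
  set T := ‖linearCombination ℝ γ a'‖
  have hT : T ≤ S + |a d| := by
    have := norm_sub_le (linearCombination ℝ γ a) (a d • γ d)
    rwa [linearCombination_eq_erase_add γ a d, add_sub_cancel_right, norm_smul, hγ, mul_one,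
      ← linearCombination_eq_erase_add] at this
  have hcoef : ∀ i, |a' i| ≤ C * T := fun i => (hv2.abs_apply_le_norm hv1 a' i).trans h
  -- `f` almost annihilates `γ i` for `i > d`, so it nearly recovers the coefficient `a d`
  have htail : |f (linearCombination ℝ γ a')| ≤ T / 2 := by
    have hsum : f (linearCombination ℝ γ a') = ∑ i ∈ a'.support, a' i * f (γ i) := by
      simp [linearCombination_apply, Finsupp.sum]
    have hT0 : 0 ≤ C * T * (4 * C)⁻¹ := by positivity
    rw [hsum]
    refine (abs_sum_le_of_abs_le_geometric hT0 _ fun i hi => ?_).trans_eq (by field_simp; ring)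
    rw [abs_mul, mul_assoc]
    exact mul_le_mul (hcoef i) (hfj i (succ_le_of_mem_support_erase ha i hi)) (abs_nonneg _)
      (by positivity)
  have had : |a d| ≤ S + T / 2 := by
    have hrec : a d = f (linearCombination ℝ γ a) - f (linearCombination ℝ γ a') := by
      rw [linearCombination_eq_erase_add γ a d, map_add, map_smul, hfd, smul_eq_mul, mul_one]
      ring
    have hfS : |f (linearCombination ℝ γ a)| ≤ S := by
      simpa [← Real.norm_eq_abs] using f.le_of_opNorm_le hf (linearCombination ℝ γ a)
    rw [hrec]
    exact (abs_sub _ _).trans (add_le_add hfS htail)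
  have hv : ‖linearCombination ℝ v a‖ ≤ ‖linearCombination ℝ v a'‖ + |a d| := by
    rw [linearCombination_eq_erase_add v a d]
    refine (norm_add_le _ _).trans_eq ?_
    rw [norm_smul, hv1 d, mul_one, Real.norm_eq_abs]
  have hS0 : 0 ≤ S := norm_nonneg _
  have hCT : C * T ≤ C * (4 * S) := mul_le_mul_of_nonneg_left (by linarith) hC.le
  calc ‖linearCombination ℝ v a‖ ≤ C * T + |a d| := hv.trans (by gcongr; exact h)
    _ ≤ (4 * C + 3) * S := by linarith

theorem dominatesAt_of_dominatesAt_erase {u : ℕ → V} (hu1 : SeqNormalized u) (hu2 : SeqUncond u)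
    {C : ℝ} (hC : 0 ≤ C) {γ : ℕ → X} {d : ℕ} (hγ : ‖γ d‖ = 1) {a : ℕ →₀ ℝ}
    (h : DominatesAt C u γ (a.erase d)) : DominatesAt (C + 1) u γ a := by
  have herase : ‖linearCombination ℝ u (a.erase d)‖ ≤ ‖linearCombination ℝ u a‖ :=
    hu2.norm_linearCombination_le fun i => by
      rcases eq_or_ne i d with rfl | hid <;> simp [Finsupp.erase_ne, *]
  calc ‖linearCombination ℝ γ a‖ ≤ ‖linearCombination ℝ γ (a.erase d)‖ + |a d| := by
        rw [linearCombination_eq_erase_add γ a d]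
        refine (norm_add_le _ _).trans_eq ?_
        rw [norm_smul, hγ, mul_one, Real.norm_eq_abs]
    _ ≤ C * ‖linearCombination ℝ u a‖ + ‖linearCombination ℝ u a‖ :=
        add_le_add (h.trans (mul_le_mul_of_nonneg_left herase hC))
          (hu2.abs_apply_le_norm hu1 a d)
    _ = (C + 1) * ‖linearCombination ℝ u a‖ := by ring

end Descent

namespace Glue

variable {X : Type*} (B : ℕ → List ℕ → X) (Bad : ℕ → (ℕ →₀ ℝ) → (ℕ → X) → Prop)

open Classical in
/-- Along the branch `n`, the level at which the segment containing level `k` began. The glued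
tree follows `B D` on the segment begun at level `D`; a new segment begins right after the
branch of `B D` has exhibited a `Bad D` witness supported in the segment. -/
noncomputable def segmentStart (n : ℕ → ℕ) : ℕ → ℕ
  | 0 => 0
  | k + 1 =>
    if ∃ a : ℕ →₀ ℝ, (∀ i ∈ a.support, segmentStart n k ≤ i ∧ i ≤ k) ∧
        Bad (segmentStart n k) a (TreeBranch (B (segmentStart n k)) n) then k + 1
    else segmentStart n k

/-- `l.getD i 0` extends `l` to a sequence; only its first `l.length - 1` terms are read. -/
noncomputable def tree (l : List ℕ) : X :=
  B (segmentStart B Bad (fun i => l.getD i 0) (l.length - 1)) l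

variable {B Bad} (n : ℕ → ℕ)

theorem segmentStart_le (k : ℕ) : segmentStart B Bad n k ≤ k := by
  induction k with
  | zero => rfl
  | succ k ih => rw [segmentStart]; split_ifs <;> omega

theorem segmentStart_succ_of_ne (k : ℕ) (h : segmentStart B Bad n (k + 1) ≠ k + 1) :
    segmentStart B Bad n (k + 1) = segmentStart B Bad n k := by
  rw [segmentStart] at h ⊢
  split_ifs at h ⊢ <;> simp_all

theorem exists_bad_of_segmentStart_succ {k : ℕ} (h : segmentStart B Bad n (k + 1) = k + 1) :
    ∃ a : ℕ →₀ ℝ, (∀ i ∈ a.support, segmentStart B Bad n k ≤ i ∧ i ≤ k) ∧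
      Bad (segmentStart B Bad n k) a (TreeBranch (B (segmentStart B Bad n k)) n) := by
  have hle : segmentStart B Bad n k ≤ k := segmentStart_le n k
  rw [segmentStart] at h
  split_ifs at h with hbad
  · exact hbad
  · omega

theorem segmentStart_mono : Monotone (segmentStart B Bad n) := by
  refine monotone_nat_of_le_succ fun k => ?_
  by_cases h : segmentStart B Bad n (k + 1) = k + 1
  · rw [h]; exact (segmentStart_le n k).trans k.le_succ
  · rw [segmentStart_succ_of_ne n k h]

theorem segmentStart_eq_of_le {j k : ℕ} (h₁ : segmentStart B Bad n k ≤ j) (h₂ : j ≤ k) :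
    segmentStart B Bad n j = segmentStart B Bad n k := by
  induction k with
  | zero => rw [Nat.le_zero.mp h₂]
  | succ k ih =>
    rcases Nat.of_le_succ h₂ with hjk | rfl
    · have h : segmentStart B Bad n (k + 1) ≠ k + 1 := by omega
      rw [segmentStart_succ_of_ne n k h] at h₁ ⊢
      exact ih h₁ hjk
    · rfl

theorem segmentStart_congr
    (hcongr : ∀ d a γ γ', (∀ i ∈ a.support, γ i = γ' i) → Bad d a γ → Bad d a γ')
    {n n' : ℕ → ℕ} {k : ℕ} (h : ∀ j < k, n j = n' j) :
    segmentStart B Bad n k = segmentStart B Bad n' k := by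
  induction k with
  | zero => rfl
  | succ k ih =>
    have hD := ih fun j hj => h j (Nat.lt_succ_of_lt hj)
    have hbranch : ∀ D i, i ≤ k → TreeBranch (B D) n i = TreeBranch (B D) n' i :=
      fun D i hi => treeBranch_congr _ fun j hj => h j (by omega)
    rw [segmentStart, segmentStart, hD]
    congr 1
    refine propext (exists_congr fun a => and_congr_right fun hs => ⟨?_, ?_⟩) <;>
      refine hcongr _ _ _ _ fun i hi => ?_
    · exact hbranch _ i (hs i hi).2
    · exact (hbranch _ i (hs i hi).2).symm

theorem treeBranch_tree
    (hcongr : ∀ d a γ γ', (∀ i ∈ a.support, γ i = γ' i) → Bad d a γ → Bad d a γ') (i : ℕ) :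
    TreeBranch (tree B Bad) n i = TreeBranch (B (segmentStart B Bad n i)) n i := by
  rw [treeBranch_eq, tree, length_seqPrefix, Nat.add_sub_cancel,
    segmentStart_congr hcongr fun j hj => getD_seqPrefix n (Nat.lt_succ_of_lt hj), treeBranch_eq]

theorem isNWNTree_tree [NormedAddCommGroup X] [NormedSpace ℝ X] (hB : ∀ d, IsNWNTree (B d))
    (hcongr : ∀ d a γ γ', (∀ i ∈ a.support, γ i = γ' i) → Bad d a γ → Bad d a γ') :
    IsNWNTree (tree B Bad) := by
  refine ⟨fun l hl => (hB _).1 l hl, fun l hl f => ?_⟩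
  refine ((hB (segmentStart B Bad (fun i => l.getD i 0) l.length)).2 l hl f).congr fun m => ?_
  rw [tree, List.length_append, List.length_singleton, Nat.add_sub_cancel,
    segmentStart_congr hcongr fun j hj => List.getD_append l [m] 0 j hj]

theorem exists_segmentStart_succ_eq (hn : StrictMono n)
    (hbad : ∀ d n, StrictMono n → ∃ a : ℕ →₀ ℝ, (∀ i ∈ a.support, d ≤ i) ∧
      Bad d a (TreeBranch (B d) n)) (k : ℕ) :
    ∃ j, k ≤ j ∧ segmentStart B Bad n (j + 1) = j + 1 := by
  by_contra! hnot
  have hconst : ∀ j, k ≤ j → segmentStart B Bad n j = segmentStart B Bad n k := by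
    refine Nat.le_induction rfl fun j hkj ih => ?_
    rw [segmentStart_succ_of_ne n j (hnot j hkj), ih]
  obtain ⟨a, ha, hba⟩ := hbad (segmentStart B Bad n k) n hn
  set L := max k (a.support.sup id)
  have hL : segmentStart B Bad n L = segmentStart B Bad n k := hconst L (le_max_left _ _)
  have hwitness : ∃ a : ℕ →₀ ℝ, (∀ i ∈ a.support, segmentStart B Bad n L ≤ i ∧ i ≤ L) ∧
      Bad (segmentStart B Bad n L) a (TreeBranch (B (segmentStart B Bad n L)) n) :=
    ⟨a, fun i hi => ⟨hL ▸ ha i hi, (Finset.le_sup (f := id) hi).trans (le_max_right _ _)⟩,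
      hL ▸ hba⟩
  exact hnot L (le_max_left _ _) (by rw [segmentStart, if_pos hwitness])

theorem exists_bad_treeBranch_tree (hn : StrictMono n)
    (hbad : ∀ d n, StrictMono n → ∃ a : ℕ →₀ ℝ, (∀ i ∈ a.support, d ≤ i) ∧
      Bad d a (TreeBranch (B d) n))
    (hcongr : ∀ d a γ γ', (∀ i ∈ a.support, γ i = γ' i) → Bad d a γ → Bad d a γ') (d₀ : ℕ) :
    ∃ d, d₀ ≤ d ∧ ∃ a, Bad d a (TreeBranch (tree B Bad) n) := by
  obtain ⟨j₁, hj₁, hreset₁⟩ := exists_segmentStart_succ_eq n hn hbad d₀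
  obtain ⟨j₂, hj₂, hreset₂⟩ := exists_segmentStart_succ_eq n hn hbad (j₁ + 1)
  obtain ⟨a, ha, hba⟩ := exists_bad_of_segmentStart_succ n hreset₂
  have hstart : j₁ + 1 ≤ segmentStart B Bad n j₂ :=
    hreset₁ ▸ segmentStart_mono n hj₂
  refine ⟨_, by omega, a, hcongr _ _ _ _ (fun i hi => ?_) hba⟩
  rw [treeBranch_tree n hcongr, segmentStart_eq_of_le n (ha i hi).1 (ha i hi).2]

end Glue

def TreeTailEst (X : Type*) [NormedAddCommGroup X] [NormedSpace ℝ X]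
    (P : ℝ → (ℕ →₀ ℝ) → (ℕ → X) → Prop) (d : ℕ) (C : ℝ) : Prop :=
  ∀ x : List ℕ → X, IsNWNTree x → ∃ n, StrictMono n ∧
    ∀ a : ℕ →₀ ℝ, (∀ i ∈ a.support, d ≤ i) → P C a (TreeBranch x n)

section TailEstimates

variable {X V : Type*} [NormedAddCommGroup X] [NormedSpace ℝ X]
  [NormedAddCommGroup V] [NormedSpace ℝ V]

theorem exists_treeTailEst {P : ℝ → (ℕ →₀ ℝ) → (ℕ → X) → Prop}
    (hcongr : ∀ C a γ γ', (∀ i ∈ a.support, γ i = γ' i) → P C a γ → P C a γ')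
    (hmono : ∀ C C' a γ, C ≤ C' → P C a γ → P C' a γ)
    (h : ∀ x : List ℕ → X, IsNWNTree x → ∃ n, StrictMono n ∧ ∃ c, ∀ a, P c a (TreeBranch x n)) :
    ∃ d : ℕ, TreeTailEst X P d (d + 1) := by
  by_contra! hfail
  simp only [TreeTailEst, not_forall, not_exists, not_and, exists_prop] at hfail
  choose B hB hbad using hfail
  have hcongr' : ∀ (d : ℕ) a γ γ', (∀ i ∈ a.support, γ i = γ' i) →
      ¬ P (d + 1) a γ → ¬ P (d + 1) a γ' :=
    fun d a γ γ' hγ hP hP' => hP (hcongr _ a γ' γ (fun i hi => (hγ i hi).symm) hP')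
  obtain ⟨n, hn, c, hc⟩ := h _ (Glue.isNWNTree_tree hB hcongr')
  obtain ⟨d, hd, a, ha⟩ := Glue.exists_bad_treeBranch_tree n hn hbad hcongr' ⌈c⌉₊
  exact ha (hmono c _ a _ ((Nat.le_ceil c).trans (by exact_mod_cast hd.trans d.le_succ)) (hc a))

theorem TreeTailEst.exists_zero {P : ℝ → (ℕ →₀ ℝ) → (ℕ → X) → Prop}
    (hstep : ∀ d C, 1 ≤ C → TreeTailEst X P (d + 1) C → ∃ C', 1 ≤ C' ∧ TreeTailEst X P d C')
    {d : ℕ} {C : ℝ} (hC : 1 ≤ C) (h : TreeTailEst X P d C) :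
    ∃ C', 1 ≤ C' ∧ TreeTailEst X P 0 C' := by
  induction d generalizing C with
  | zero => exact ⟨C, hC, h⟩
  | succ d ih =>
    obtain ⟨C', hC', h'⟩ := hstep d C hC h
    exact ih hC' h'

theorem treeTailEst_lower_of_succ {v : ℕ → V} (hv1 : SeqNormalized v) (hv2 : SeqUncond v)
    {d : ℕ} {C : ℝ} (hC : 0 < C)
    (h : TreeTailEst X (fun C a γ => DominatesAt C γ v a) (d + 1) C) :
    TreeTailEst X (fun C a γ => DominatesAt C γ v a) d (4 * C + 3) := by
  intro x hx
  obtain ⟨y, hy, hbranch, hfun⟩ := hx.exists_prune_almostBiorthogonal (ε := (4 * C)⁻¹)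
    (by positivity) d
  obtain ⟨n, hn, hdom⟩ := h y hy
  obtain ⟨n', hn', hyx⟩ := hbranch n
  obtain ⟨f, hf, hfd, hfj⟩ := hfun n
  refine ⟨n', hn', fun a ha => hyx ▸ ?_⟩
  exact dominatesAt_of_almostBiorthogonal hv1 hv2 hC (hy.norm_treeBranch hn d) hf hfd hfj ha
    (hdom _ (succ_le_of_mem_support_erase ha))

theorem treeTailEst_upper_of_succ {u : ℕ → V} (hu1 : SeqNormalized u) (hu2 : SeqUncond u)
    {d : ℕ} {C : ℝ} (hC : 0 ≤ C)
    (h : TreeTailEst X (fun C a γ => DominatesAt C u γ a) (d + 1) C) :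
    TreeTailEst X (fun C a γ => DominatesAt C u γ a) d (C + 1) := by
  intro x hx
  obtain ⟨n, hn, hdom⟩ := h x hx
  exact ⟨n, hn, fun a ha => dominatesAt_of_dominatesAt_erase hu1 hu2 hC
    (hx.norm_treeBranch hn d) (hdom _ (succ_le_of_mem_support_erase ha))⟩

theorem exists_lowerTreeEst {v : ℕ → V} (hv1 : SeqNormalized v) (hv2 : SeqUncond v)
    (h : ∀ x : List ℕ → X, IsNWNTree x →
      ∃ n, StrictMono n ∧ ∃ c, Dominates c (TreeBranch x n) v) :
    ∃ C, 1 ≤ C ∧ LowerTreeEst X C v := by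
  obtain ⟨d, hd⟩ := exists_treeTailEst (P := fun C a γ => DominatesAt C γ v a)
    (fun C a γ γ' hγ hP => hP.congr_left hγ)
    (fun C C' a γ hC hP => hP.mono hC) h
  obtain ⟨C, hC, h0⟩ := TreeTailEst.exists_zero
    (fun d C hC h => ⟨_, by linarith, treeTailEst_lower_of_succ hv1 hv2 (by linarith) h⟩)
    (by simp) hd
  refine ⟨C, hC, fun x hx => ?_⟩
  obtain ⟨n, hn, hdom⟩ := h0 x hx
  exact ⟨n, hn, fun a => hdom a fun i _ => i.zero_le⟩

theorem exists_upperTreeEst {u : ℕ → V} (hu1 : SeqNormalized u) (hu2 : SeqUncond u)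
    (h : ∀ x : List ℕ → X, IsNWNTree x →
      ∃ n, StrictMono n ∧ ∃ c, Dominates c u (TreeBranch x n)) :
    ∃ C, 1 ≤ C ∧ UpperTreeEst X C u := by
  obtain ⟨d, hd⟩ := exists_treeTailEst (P := fun C a γ => DominatesAt C u γ a)
    (fun C a γ γ' hγ hP => hP.congr_right hγ)
    (fun C C' a γ hC hP => hP.mono hC) h
  obtain ⟨C, hC, h0⟩ := TreeTailEst.exists_zero
    (fun d C hC h => ⟨_, by linarith, treeTailEst_upper_of_succ hu1 hu2 (by linarith) h⟩)
    (by simp) hd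
  refine ⟨C, hC, fun x hx => ?_⟩
  obtain ⟨n, hn, hdom⟩ := h0 x hx
  exact ⟨n, hn, fun a => hdom a fun i _ => i.zero_le⟩

end TailEstimates

theorem statement1_general {X U V : Type*}
    [NormedAddCommGroup X] [NormedSpace ℝ X]
    [NormedAddCommGroup U] [NormedSpace ℝ U]
    [NormedAddCommGroup V] [NormedSpace ℝ V]
    (u : ℕ → U) (v : ℕ → V) (hu : Is1UncondBasis u) (hv : Is1UncondBasis v)
    (h : ∀ x : List ℕ → X, IsNWNTree x →
      (∃ n : ℕ → ℕ, StrictMono n ∧ ∃ c : ℝ, 1 ≤ c ∧ Dominates c (TreeBranch x n) v) ∧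
      (∃ n : ℕ → ℕ, StrictMono n ∧ ∃ c : ℝ, 1 ≤ c ∧ Dominates c u (TreeBranch x n))) :
    ∃ C : ℝ, 1 ≤ C ∧ LowerTreeEst X C v ∧ UpperTreeEst X C u := by
  obtain ⟨Cl, hCl, hlower⟩ := exists_lowerTreeEst hv.1 hv.2.1 fun x hx =>
    let ⟨n, hn, c, _, hc⟩ := (h x hx).1
    ⟨n, hn, c, hc⟩
  obtain ⟨Cu, -, hupper⟩ := exists_upperTreeEst hu.1 hu.2.1 fun x hx =>
    let ⟨n, hn, c, _, hc⟩ := (h x hx).2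
    ⟨n, hn, c, hc⟩
  refine ⟨max Cl Cu, hCl.trans (le_max_left _ _), fun x hx => ?_, fun x hx => ?_⟩
  · obtain ⟨n, hn, hdom⟩ := hlower x hx
    exact ⟨n, hn, hdom.mono (le_max_left _ _)⟩
  · obtain ⟨n, hn, hdom⟩ := hupper x hx
    exact ⟨n, hn, hdom.mono (le_max_right _ _)⟩

/-- If every normalized weakly null tree in `X` has a branch dominating
`(v i)` and a branch dominated by `(u i)`, then there is a single constant `C ≥ 1` such that
`X` satisfies `C`-`(V,U)`-tree estimates. -/
theorem statement1 {X U V : Type*}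
    [NormedAddCommGroup X] [NormedSpace ℝ X] [CompleteSpace X]
    [NormedAddCommGroup U] [NormedSpace ℝ U] [CompleteSpace U]
    [NormedAddCommGroup V] [NormedSpace ℝ V] [CompleteSpace V]
    (u : ℕ → U) (v : ℕ → V) (hu : Is1UncondBasis u) (hv : Is1UncondBasis v)
    (h : ∀ x : List ℕ → X, IsNWNTree x →
      (∃ n : ℕ → ℕ, StrictMono n ∧ ∃ c : ℝ, 1 ≤ c ∧ Dominates c (TreeBranch x n) v) ∧
      (∃ n : ℕ → ℕ, StrictMono n ∧ ∃ c : ℝ, 1 ≤ c ∧ Dominates c u (TreeBranch x n))) :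
    ∃ C : ℝ, 1 ≤ C ∧ LowerTreeEst X C v ∧ UpperTreeEst X C u :=
  statement1_general u v hu hv h
end

section
/- Let Z be a Banach space with an FDD (E_i) and let V be a Banach space with a normalized 1-unconditional basis (v_i). Then (E_i) satisfies V-lower estimates in Z if and only if (E_i^*) satisfies V^(*)-upper estimates in Z^(*) (with respect to the basis (v_i^*) of biorthogonal functionals). Moreover, if (E_i) is bimonotone in Z, then for any C ≥ 1, (E_i) satisfies C-V-lower estimates in Z if and only if (E_i^*) satisfies C-V^(*)-upper estimates in Z^(*). -/
open Filter Topology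
open scoped ENNReal

/-! Let `K` bound the norms of the interval projections `P_{[a,b)}` (`K = 1` in the
bimonotone case). A block sequence of either FDD sits in consecutive intervals
`I_j = [m_j, m_{j+1})`.

If `(E_i)` has `C`-`V`-lower estimates and `(g_j)` is a normalized block sequence of `(E_i^*)`,
then `|(∑ a_j g_j) z| ≤ ∑ |a_j| ‖P_{I_j} z‖`; pairing `∑ a_j v_j^*` with
`∑ sign(a_j) ‖P_{I_j} z‖ v_j` and using 1-unconditionality bounds this by
`‖∑ a_j v_j^*‖ ‖∑ ‖P_{I_j} z‖ v_j‖`, and the lower estimate for the normalized pieces of `z`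
gives `‖∑ ‖P_{I_j} z‖ v_j‖ ≤ C K ‖z‖`.

Conversely, for a normalized block sequence `(z_j)` put `g_j = z_j^* ∘ P_{I_j}` with `z_j^*`
norming `z_j`: then `g_j (z_i) = δ_{ij}` and `1 ≤ ‖g_j‖ ≤ K`. If `f` norms `∑ a_j v_j`, then
`‖∑ a_j v_j‖ = (∑ f(v_j) g_j)(∑ a_j z_j)`, and the upper estimate for `(g_j / ‖g_j‖)` together
with the 1-unconditionality of `(v_j^*)` gives `‖∑ f(v_j) g_j‖ ≤ C K ‖f‖ ≤ C K`. -/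

theorem dominates_iff {E F : Type*} [NormedAddCommGroup E] [NormedSpace ℝ E]
    [NormedAddCommGroup F] [NormedSpace ℝ F] {C : ℝ} {f : ℕ → F} {e : ℕ → E} :
    Dominates C f e ↔
      ∀ (s : Finset ℕ) (a : ℕ → ℝ), ‖∑ i ∈ s, a i • e i‖ ≤ C * ‖∑ i ∈ s, a i • f i‖ := by
  classical
  refine ⟨fun h s a => ?_, fun h a => h a.support a⟩
  have hb := h (Finsupp.onFinset s (fun i => if i ∈ s then a i else 0) fun i hi => by
    by_contra h'; exact hi (if_neg h'))
  simpa only [Finsupp.onFinset_sum, ite_smul, zero_smul, Finset.sum_ite_mem, Finset.inter_self,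
    implies_true] using hb

theorem exists_consecutive_Ico_cover (S : ℕ → Set ℕ) (hfin : ∀ j, (S j).Finite)
    (hne : ∀ j, (S j).Nonempty) (hsucc : ∀ j, ∀ i ∈ S j, ∀ i' ∈ S (j + 1), i < i') :
    ∃ m : ℕ → ℕ, ∀ j, S j ⊆ Finset.Ico (m j) (m (j + 1)) := by
  let M j := (hfin j).toFinset.max' ((hfin j).toFinset_nonempty.2 (hne j))
  have hM : ∀ j, M j ∈ S j := fun j => (hfin j).mem_toFinset.1 (Finset.max'_mem _ _)
  have hle : ∀ j, ∀ i ∈ S j, i ≤ M j := fun j i hi =>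
    Finset.le_max' _ i ((hfin j).mem_toFinset.2 hi)
  refine ⟨fun j => Nat.casesOn j 0 fun p => M p + 1, fun j i hi =>
    Finset.mem_Ico.2 ⟨?_, Nat.lt_succ_of_le (hle j i hi)⟩⟩
  cases j with
  | zero => exact Nat.zero_le i
  | succ p => exact hsucc p _ (hM p) i hi

section Biorthogonal

variable {X : Type*} [NormedAddCommGroup X] [NormedSpace ℝ X] {x : ℕ → X}
  {φ : ℕ → StrongDual ℝ X}

theorem sum_smul_apply_sum_smul_of_biorthogonal
    (hφ : ∀ i j, φ i (x j) = if i = j then (1 : ℝ) else 0) (s t : Finset ℕ) (b a : ℕ → ℝ) :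
    (∑ j ∈ s, b j • φ j) (∑ i ∈ t, a i • x i) = ∑ j ∈ s ∩ t, b j * a j := by
  simp [sum_apply, map_sum, hφ, Finset.sum_ite_mem, Finset.inter_comm, mul_comm]

theorem SeqUncond.norm_sum_le_of_subset (hunc : SeqUncond x) {s t : Finset ℕ} (hst : s ⊆ t)
    (a : ℕ → ℝ) : ‖∑ i ∈ s, a i • x i‖ ≤ ‖∑ i ∈ t, a i • x i‖ := by
  classical
  have := hunc t a (fun i => if i ∈ s then 1 else 0) fun i => by split_ifs <;> simp
  simpa only [ite_mul, one_mul, zero_mul, ite_smul, zero_smul, Finset.sum_ite_mem,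
    Finset.inter_eq_right.2 hst] using this

theorem SeqUncond.norm_sum_mul_smul_le (hunc : SeqUncond x) {K : ℝ} (hK : 0 < K)
    {ε : ℕ → ℝ} (hε : ∀ i, |ε i| ≤ K) (s : Finset ℕ) (a : ℕ → ℝ) :
    ‖∑ i ∈ s, (ε i * a i) • x i‖ ≤ K * ‖∑ i ∈ s, a i • x i‖ := by
  have := hunc s (fun i => K * a i) (fun i => ε i / K) fun i => by
    rw [abs_div, abs_of_pos hK, div_le_one hK]; exact hε i
  calc ‖∑ i ∈ s, (ε i * a i) • x i‖ = ‖∑ i ∈ s, (ε i / K * (K * a i)) • x i‖ := by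
        congr 1; exact Finset.sum_congr rfl fun i _ => by field_simp
    _ ≤ ‖∑ i ∈ s, (K * a i) • x i‖ := this
    _ = K * ‖∑ i ∈ s, a i • x i‖ := by
        simp_rw [mul_smul, ← Finset.smul_sum, norm_smul, Real.norm_of_nonneg hK.le]

theorem SeqTotal.opNorm_le_of_forall_sum (htot : SeqTotal x) {T : StrongDual ℝ X} {M : ℝ}
    (hM : 0 ≤ M)
    (h : ∀ (t : Finset ℕ) (a : ℕ → ℝ), |T (∑ i ∈ t, a i • x i)| ≤ M * ‖∑ i ∈ t, a i • x i‖) :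
    ‖T‖ ≤ M := by
  refine T.opNorm_le_bound hM fun y => ?_
  have hspan : (Submodule.span ℝ (Set.range x) : Set X) ⊆ {y | ‖T y‖ ≤ M * ‖y‖} := by
    intro y hy
    obtain ⟨c, rfl⟩ := Finsupp.mem_span_range_iff_exists_finsupp.1 hy
    exact h c.support c
  have hy : y ∈ closure (Submodule.span ℝ (Set.range x) : Set X) := by
    rw [← Submodule.topologicalClosure_coe, htot]; trivial
  exact closure_minimal hspan
    (isClosed_le (continuous_norm.comp T.continuous) (continuous_const.mul continuous_norm)) hy

theorem SeqUncond.biorthogonal (hunc : SeqUncond x) (htot : SeqTotal x)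
    (hφ : ∀ i j, φ i (x j) = if i = j then (1 : ℝ) else 0) : SeqUncond φ := by
  intro s c ε hε
  refine htot.opNorm_le_of_forall_sum (norm_nonneg _) fun t a => ?_
  have hswap : (∑ j ∈ s, (ε j * c j) • φ j) (∑ i ∈ t, a i • x i) =
      (∑ j ∈ s, c j • φ j) (∑ i ∈ t, (ε i * a i) • x i) := by
    simp only [sum_smul_apply_sum_smul_of_biorthogonal hφ]
    exact Finset.sum_congr rfl fun _ _ => by ring
  rw [hswap, ← Real.norm_eq_abs]
  exact ((∑ j ∈ s, c j • φ j).le_opNorm _).trans (by gcongr; exact hunc t a ε hε)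

theorem norm_sum_apply_smul_biorthogonal_le (hunc : SeqUncond x) (htot : SeqTotal x)
    (hφ : ∀ i j, φ i (x j) = if i = j then (1 : ℝ) else 0) (f : StrongDual ℝ X)
    (s : Finset ℕ) : ‖∑ j ∈ s, f (x j) • φ j‖ ≤ ‖f‖ := by
  refine htot.opNorm_le_of_forall_sum (norm_nonneg f) fun t a => ?_
  have hf : (∑ j ∈ s, f (x j) • φ j) (∑ i ∈ t, a i • x i) = f (∑ i ∈ s ∩ t, a i • x i) := by
    simp [sum_smul_apply_sum_smul_of_biorthogonal hφ, map_sum, mul_comm]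
  rw [hf, ← Real.norm_eq_abs]
  exact (f.le_opNorm _).trans
    (by gcongr; exact hunc.norm_sum_le_of_subset Finset.inter_subset_right a)

theorem sum_abs_mul_le_norm_mul_norm (hunc : SeqUncond x)
    (hφ : ∀ i j, φ i (x j) = if i = j then (1 : ℝ) else 0) (s : Finset ℕ) (a c : ℕ → ℝ) :
    ∑ j ∈ s, |a j| * c j ≤ ‖∑ j ∈ s, a j • φ j‖ * ‖∑ j ∈ s, c j • x j‖ := by
  have hsign : ∀ i, |(SignType.sign (a i) : ℝ)| ≤ 1 := fun i => by
    rcases lt_trichotomy (a i) 0 with h | h | h <;> simp [h]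
  calc ∑ j ∈ s, |a j| * c j
      = (∑ j ∈ s, a j • φ j) (∑ i ∈ s, (SignType.sign (a i) * c i) • x i) := by
        rw [sum_smul_apply_sum_smul_of_biorthogonal hφ, Finset.inter_self]
        exact Finset.sum_congr rfl fun j _ => by rw [← mul_assoc, self_mul_sign]
    _ ≤ ‖∑ j ∈ s, a j • φ j‖ * ‖∑ i ∈ s, (SignType.sign (a i) * c i) • x i‖ :=
        (le_abs_self _).trans ((∑ j ∈ s, a j • φ j).le_opNorm _)
    _ ≤ ‖∑ j ∈ s, a j • φ j‖ * ‖∑ j ∈ s, c j • x j‖ := by gcongr; exact hunc s c _ hsign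

end Biorthogonal

namespace FDD

variable {Z : Type*} [NormedAddCommGroup Z] [NormedSpace ℝ Z] (F : FDD Z)

theorem proj_proj_of_ne {i j : ℕ} (h : i ≠ j) (z : Z) : F.proj i (F.proj j z) = 0 :=
  F.proj_other i j h _ (F.mem_proj j z)

theorem projIco_apply (a b : ℕ) (z : Z) :
    F.projIco a b z = ∑ i ∈ Finset.Ico a b, F.proj i z :=
  sum_apply _ _ _

theorem proj_projIco_of_notMem {a b i : ℕ} (hi : i ∉ Finset.Ico a b) (z : Z) :
    F.proj i (F.projIco a b z) = 0 := by
  rw [projIco_apply, map_sum]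
  exact Finset.sum_eq_zero fun k hk => F.proj_proj_of_ne (ne_of_mem_of_not_mem hk hi).symm z

theorem projIco_proj_of_notMem {a b i : ℕ} (hi : i ∉ Finset.Ico a b) (z : Z) :
    F.projIco a b (F.proj i z) = 0 := by
  rw [projIco_apply]
  exact Finset.sum_eq_zero fun k hk => F.proj_proj_of_ne (ne_of_mem_of_not_mem hk hi) z

theorem supp_smul_subset (c : ℝ) (z : Z) : F.supp (c • z) ⊆ F.supp z := fun i hi h =>
  hi (by rw [map_smul, h, smul_zero])

theorem dualSupp_smul_subset (c : ℝ) (f : StrongDual ℝ Z) : F.dualSupp (c • f) ⊆ F.dualSupp f :=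
  fun _ hi h => hi (by rw [ContinuousLinearMap.smul_comp, h, smul_zero])

theorem supp_projIco_subset (a b : ℕ) (z : Z) : F.supp (F.projIco a b z) ⊆ Finset.Ico a b :=
  fun _ hi => by_contra fun h => hi (F.proj_projIco_of_notMem h z)

theorem dualSupp_comp_projIco_subset (f : StrongDual ℝ Z) (a b : ℕ) :
    F.dualSupp (f.comp (F.projIco a b)) ⊆ Finset.Ico a b := fun _ hi =>
  by_contra fun h => hi (ContinuousLinearMap.ext fun z => by
    simp [F.projIco_proj_of_notMem h z])

theorem map_eq_sum_map_proj {Y : Type*} [NormedAddCommGroup Y] [NormedSpace ℝ Y]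
    (T : Z →L[ℝ] Y) (s : Finset ℕ) (z : Z) (h : ∀ i ∉ s, T (F.proj i z) = 0) :
    T z = ∑ i ∈ s, T (F.proj i z) := by
  have hlim := (T.continuous.tendsto z).comp (F.tendsto_partialSum z)
  refine tendsto_nhds_unique hlim (tendsto_const_nhds.congr' ?_)
  filter_upwards [eventually_ge_atTop (s.sup id + 1)] with N hN
  rw [Function.comp_apply, map_sum]
  refine Finset.sum_subset (fun i hi => Finset.mem_range.2 ?_) fun i _ hi => h i hi
  exact (Finset.le_sup (f := id) hi).trans_lt hN

theorem eq_sum_proj_of_supp_subset {s : Finset ℕ} {z : Z} (hz : F.supp z ⊆ s) :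
    z = ∑ i ∈ s, F.proj i z :=
  F.map_eq_sum_map_proj (ContinuousLinearMap.id ℝ Z) s z fun _ hi => by_contra fun h => hi (hz h)

theorem projIco_eq_self {a b : ℕ} {z : Z} (hz : F.supp z ⊆ Finset.Ico a b) :
    F.projIco a b z = z :=
  (F.projIco_apply a b z).trans (F.eq_sum_proj_of_supp_subset hz).symm

theorem projIco_eq_zero_of_disjoint {s : Set ℕ} {a b : ℕ} {z : Z} (hz : F.supp z ⊆ s)
    (hs : Disjoint s (Finset.Ico a b)) : F.projIco a b z = 0 := by
  rw [projIco_apply]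
  exact Finset.sum_eq_zero fun i hi => by_contra fun h => hs.notMem_of_mem_right hi (hz h)

theorem apply_projIco_of_dualSupp_subset {f : StrongDual ℝ Z} {a b : ℕ}
    (hf : F.dualSupp f ⊆ Finset.Ico a b) (z : Z) : f (F.projIco a b z) = f z := by
  rw [F.map_eq_sum_map_proj f (Finset.Ico a b) z fun i hi =>
    congrArg (· z) (not_not.1 fun h => hi (hf h)), projIco_apply, map_sum]

theorem supp_nonempty {z : Z} (hz : z ≠ 0) : (F.supp z).Nonempty := by
  by_contra h
  rw [Set.not_nonempty_iff_eq_empty] at h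
  exact hz (by simpa using F.eq_sum_proj_of_supp_subset (s := ∅) (by simp [h]))

theorem dualSupp_nonempty {f : StrongDual ℝ Z} (hf : f ≠ 0) : (F.dualSupp f).Nonempty := by
  by_contra h
  refine hf (ContinuousLinearMap.ext fun z => ?_)
  simpa using F.map_eq_sum_map_proj f ∅ z fun i _ =>
    congrArg (· z) (not_not.1 fun hi => h ⟨i, hi⟩)

theorem projIco_eq_sub {a b : ℕ} (hab : a ≤ b) :
    F.projIco a b = ∑ n ∈ Finset.range b, F.proj n - ∑ n ∈ Finset.range a, F.proj n :=
  Finset.sum_Ico_eq_sub _ hab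

theorem sum_projIco_of_monotone {m : ℕ → ℕ} (hm : Monotone m) (N : ℕ) :
    ∑ j ∈ Finset.range N, F.projIco (m j) (m (j + 1)) = F.projIco (m 0) (m N) := by
  rw [F.projIco_eq_sub (hm (Nat.zero_le N)),
    ← Finset.sum_range_sub (fun j => ∑ n ∈ Finset.range (m j), F.proj n)]
  exact Finset.sum_congr rfl fun j _ => F.projIco_eq_sub (hm (Nat.le_succ j))

theorem exists_norm_projIco_le [CompleteSpace Z] :
    ∃ K : ℝ, 1 ≤ K ∧ ∀ (a b : ℕ) (z : Z), ‖F.projIco a b z‖ ≤ K * ‖z‖ := by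
  let S : ℕ → Z →L[ℝ] Z := fun N => ∑ n ∈ Finset.range N, F.proj n
  obtain ⟨B, hB⟩ := banach_steinhaus (g := S) fun z => by
    obtain ⟨B, hB⟩ := ((continuous_norm.tendsto z).comp (F.tendsto_partialSum z)).bddAbove_range
    exact ⟨B, fun N => by simpa [S, sum_apply] using hB (Set.mem_range_self N)⟩
  have hproj : ∀ a b, ‖F.projIco a b‖ ≤ 2 * B := by
    intro a b
    rcases le_total a b with hab | hba
    · calc ‖F.projIco a b‖ = ‖S b - S a‖ := by rw [F.projIco_eq_sub hab]
        _ ≤ ‖S b‖ + ‖S a‖ := norm_sub_le _ _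
        _ ≤ 2 * B := by linarith [hB b, hB a]
    · simp only [projIco, Finset.Ico_eq_empty_of_le hba, Finset.sum_empty, norm_zero]
      linarith [norm_nonneg (S 0), hB 0]
  exact ⟨max (2 * B) 1, le_max_right _ _, fun a b z =>
    ((F.projIco a b).le_opNorm z).trans (by gcongr; exact (hproj a b).trans (le_max_left _ _))⟩

variable {F}

theorem IsBlockSeq.exists_Ico_cover {z : ℕ → Z} (hz : F.IsBlockSeq z) :
    ∃ m : ℕ → ℕ, ∀ j, F.supp (z j) ⊆ Finset.Ico (m j) (m (j + 1)) :=
  exists_consecutive_Ico_cover _ (fun j => (hz.1 j).2) (fun j => F.supp_nonempty (hz.1 j).1) hz.2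

theorem IsDualBlockSeq.exists_Ico_cover {g : ℕ → StrongDual ℝ Z} (hg : F.IsDualBlockSeq g) :
    ∃ m : ℕ → ℕ, ∀ j, F.dualSupp (g j) ⊆ Finset.Ico (m j) (m (j + 1)) :=
  exists_consecutive_Ico_cover _ (fun j => (hg.1 j).2) (fun j => F.dualSupp_nonempty (hg.1 j).1)
    hg.2

theorem isBlockSeq_of_supp_subset_Ico {z : ℕ → Z} {m : ℕ → ℕ} (hz : ∀ j, z j ≠ 0)
    (hm : ∀ j, F.supp (z j) ⊆ Finset.Ico (m j) (m (j + 1))) : F.IsBlockSeq z :=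
  ⟨fun j => ⟨hz j, (Finset.Ico _ _).finite_toSet.subset (hm j)⟩, fun j _ hi _ hi' =>
    (Finset.mem_Ico.1 (hm j hi)).2.trans_le (Finset.mem_Ico.1 (hm (j + 1) hi')).1⟩

theorem isDualBlockSeq_of_dualSupp_subset_Ico {g : ℕ → StrongDual ℝ Z} {m : ℕ → ℕ}
    (hg : ∀ j, g j ≠ 0) (hm : ∀ j, F.dualSupp (g j) ⊆ Finset.Ico (m j) (m (j + 1))) :
    F.IsDualBlockSeq g :=
  ⟨fun j => ⟨hg j, (Finset.Ico _ _).finite_toSet.subset (hm j)⟩, fun j _ hi _ hi' =>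
    (Finset.mem_Ico.1 (hm j hi)).2.trans_le (Finset.mem_Ico.1 (hm (j + 1) hi')).1⟩

/-- `(E_i^*)` satisfies `C`-`U`-upper estimates in `Z^(*)`. -/
def DualUpperEst {U : Type*} [NormedAddCommGroup U] [NormedSpace ℝ U] (F : FDD Z) (C : ℝ)
    (u : ℕ → U) : Prop :=
  ∀ g : ℕ → StrongDual ℝ Z, F.IsDualBlockSeq g → (∀ j, ‖g j‖ = 1) → Dominates C u g

variable {V : Type*} [NormedAddCommGroup V] [NormedSpace ℝ V]

theorem exists_unit_smul_eq_projIco {a b i : ℕ} (hi : i ∈ Finset.Ico a b) (hPi : F.proj i ≠ 0)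
    (z : Z) : ∃ w : Z, ‖w‖ = 1 ∧ F.supp w ⊆ Finset.Ico a b ∧
      ‖F.projIco a b z‖ • w = F.projIco a b z := by
  by_cases h0 : F.projIco a b z = 0
  · obtain ⟨y, hy⟩ : ∃ y, F.proj i y ≠ 0 := by
      by_contra! h
      exact hPi (ContinuousLinearMap.ext h)
    refine ⟨‖F.proj i y‖⁻¹ • F.proj i y, norm_smul_inv_norm hy, ?_, by simp [h0]⟩
    refine (F.supp_smul_subset _ _).trans fun k hk => ?_
    obtain rfl : k = i := by_contra fun hki => hk (F.proj_proj_of_ne hki y)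
    exact hi
  · refine ⟨‖F.projIco a b z‖⁻¹ • F.projIco a b z, norm_smul_inv_norm h0,
      (F.supp_smul_subset _ _).trans (F.supp_projIco_subset _ _ _), ?_⟩
    rw [smul_smul, mul_inv_cancel₀ (norm_ne_zero_iff.2 h0), one_smul]

/-- The pieces `P_{[m_j, m_{j+1})} z`, normalized, and replaced by a unit vector of their block
where they vanish, form a normalized block sequence to which the lower estimate applies. -/
theorem LowerEst.norm_sum_norm_projIco_smul_le {C : ℝ} {v : ℕ → V} (hL : F.LowerEst C v)
    {m : ℕ → ℕ} (hm : ∀ j, ∃ i ∈ Finset.Ico (m j) (m (j + 1)), F.proj i ≠ 0) (z : Z) (N : ℕ) :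
    ‖∑ j ∈ Finset.range N, ‖F.projIco (m j) (m (j + 1)) z‖ • v j‖ ≤
      C * ‖F.projIco (m 0) (m N) z‖ := by
  choose i hi hPi using hm
  choose w hw1 hwsupp hwz using fun j => exists_unit_smul_eq_projIco (hi j) (hPi j) z
  have hw : F.IsBlockSeq w :=
    isBlockSeq_of_supp_subset_Ico (fun j => norm_ne_zero_iff.1 (by simp [hw1 j])) hwsupp
  have hmono : Monotone m :=
    (strictMono_nat_of_lt_succ fun j => Finset.nonempty_Ico.1 ⟨_, hi j⟩).monotone
  calc _ ≤ C * ‖∑ j ∈ Finset.range N, ‖F.projIco (m j) (m (j + 1)) z‖ • w j‖ :=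
        dominates_iff.1 (hL w hw hw1) _ _
    _ = C * ‖F.projIco (m 0) (m N) z‖ := by
        simp_rw [hwz, ← sum_apply, F.sum_projIco_of_monotone hmono]

theorem LowerEst.dualUpperEst {C K : ℝ} {v : ℕ → V} {vStar : ℕ → StrongDual ℝ V}
    (hunc : SeqUncond v) (hbi : ∀ i j, vStar i (v j) = if i = j then (1 : ℝ) else 0)
    (hL : F.LowerEst C v) (hC : 0 ≤ C) (hK : 0 ≤ K)
    (hP : ∀ (a b : ℕ) (z : Z), ‖F.projIco a b z‖ ≤ K * ‖z‖) :
    F.DualUpperEst (C * K) vStar := by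
  intro g hg hg1
  refine dominates_iff.2 fun s a => ?_
  obtain ⟨m, hm⟩ := hg.exists_Ico_cover
  have hfill : ∀ j, ∃ i ∈ Finset.Ico (m j) (m (j + 1)), F.proj i ≠ 0 := fun j => by
    obtain ⟨i, hi⟩ := F.dualSupp_nonempty (hg.1 j).1
    exact ⟨i, hm j hi, fun h => hi (by rw [h, ContinuousLinearMap.comp_zero])⟩
  obtain ⟨N, hN⟩ := Finset.exists_nat_subset_range s
  refine ContinuousLinearMap.opNorm_le_bound _ (by positivity) fun z => ?_
  set c : ℕ → ℝ := fun j => ‖F.projIco (m j) (m (j + 1)) z‖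
  have hgz : ∀ j, |g j z| ≤ c j := fun j => by
    rw [← F.apply_projIco_of_dualSupp_subset (hm j), ← Real.norm_eq_abs]
    simpa [hg1 j] using (g j).le_opNorm (F.projIco (m j) (m (j + 1)) z)
  calc ‖(∑ j ∈ s, a j • g j) z‖ ≤ ∑ j ∈ s, |a j| * c j := by
        rw [sum_apply, Real.norm_eq_abs]
        refine (Finset.abs_sum_le_sum_abs _ _).trans (Finset.sum_le_sum fun j _ => ?_)
        rw [smul_apply, smul_eq_mul, abs_mul]
        exact mul_le_mul_of_nonneg_left (hgz j) (abs_nonneg _)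
    _ ≤ ‖∑ j ∈ s, a j • vStar j‖ * ‖∑ j ∈ s, c j • v j‖ :=
        sum_abs_mul_le_norm_mul_norm hunc hbi s a c
    _ ≤ ‖∑ j ∈ s, a j • vStar j‖ * ‖∑ j ∈ Finset.range N, c j • v j‖ := by
        gcongr; exact hunc.norm_sum_le_of_subset hN c
    _ ≤ ‖∑ j ∈ s, a j • vStar j‖ * (C * (K * ‖z‖)) := by
        gcongr
        exact (hL.norm_sum_norm_projIco_smul_le hfill z N).trans (by gcongr; exact hP _ _ _)
    _ = C * K * ‖∑ j ∈ s, a j • vStar j‖ * ‖z‖ := by ring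

theorem IsDualBlockSeq.smul {g : ℕ → StrongDual ℝ Z} (hg : F.IsDualBlockSeq g) {c : ℕ → ℝ}
    (hc : ∀ j, c j ≠ 0) : F.IsDualBlockSeq fun j => c j • g j :=
  ⟨fun j => ⟨smul_ne_zero (hc j) (hg.1 j).1, (hg.1 j).2.subset (F.dualSupp_smul_subset _ _)⟩,
    fun j _ hi _ hi' => hg.2 j _ (F.dualSupp_smul_subset _ _ hi) _ (F.dualSupp_smul_subset _ _ hi')⟩

/-- The witnesses are `z_j^* ∘ P_{[m_j, m_{j+1})}`, where `z_j^*` norms `z_j` and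
`[m_j, m_{j+1})` are consecutive intervals containing the supports of the `z_j`. -/
theorem IsBlockSeq.exists_biorthogonal_dualBlockSeq {K : ℝ} {z : ℕ → Z} (hz : F.IsBlockSeq z)
    (hz1 : ∀ j, ‖z j‖ = 1) (hK : 0 ≤ K) (hP : ∀ (a b : ℕ) (y : Z), ‖F.projIco a b y‖ ≤ K * ‖y‖) :
    ∃ g : ℕ → StrongDual ℝ Z, F.IsDualBlockSeq g ∧
      (∀ i j, g i (z j) = if i = j then (1 : ℝ) else 0) ∧ ∀ j, ‖g j‖ ≤ K := by
  obtain ⟨m, hm⟩ := hz.exists_Ico_cover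
  have hmono : Monotone m := (strictMono_nat_of_lt_succ fun j => Finset.nonempty_Ico.1
    (Finset.coe_nonempty.1 ((F.supp_nonempty (hz.1 j).1).mono (hm j)))).monotone
  choose zs hzs1 hzs using fun j => exists_dual_vector ℝ (z j) (by simp [hz1 j])
  set g : ℕ → StrongDual ℝ Z := fun j => (zs j).comp (F.projIco (m j) (m (j + 1)))
  have hgz : ∀ i j, g i (z j) = if i = j then (1 : ℝ) else 0 := by
    intro i j
    split_ifs with hij
    · subst hij
      simp [g, F.projIco_eq_self (hm i), hzs, hz1]
    · have hdisj :
          Disjoint (Finset.Ico (m j) (m (j + 1)) : Set ℕ) (Finset.Ico (m i) (m (i + 1))) := by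
        simpa [Function.onFun] using hmono.pairwise_disjoint_on_Ico_succ (Ne.symm hij)
      simp [g, F.projIco_eq_zero_of_disjoint (hm j) hdisj]
  refine ⟨g, isDualBlockSeq_of_dualSupp_subset_Ico (fun j h0 => ?_)
    (fun j => F.dualSupp_comp_projIco_subset _ _ _), hgz, fun j => ?_⟩
  · simpa [h0] using hgz j j
  · exact (g j).opNorm_le_bound hK fun y =>
      ((zs j).le_opNorm _).trans (by rw [hzs1 j, one_mul]; exact hP _ _ _)

theorem lowerEst_of_dualUpperEst {C K : ℝ} {v : ℕ → V} {vStar : ℕ → StrongDual ℝ V}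
    (hunc : SeqUncond v) (htot : SeqTotal v)
    (hbi : ∀ i j, vStar i (v j) = if i = j then (1 : ℝ) else 0)
    (hD : F.DualUpperEst C vStar) (hC : 0 ≤ C) (hK : 0 ≤ K)
    (hP : ∀ (a b : ℕ) (z : Z), ‖F.projIco a b z‖ ≤ K * ‖z‖) : F.LowerEst (C * K) v := by
  intro z hz hz1
  refine dominates_iff.2 fun s a => ?_
  obtain ⟨g, hg, hgz, hgK⟩ := hz.exists_biorthogonal_dualBlockSeq hz1 hK hP
  have hg1 : ∀ j, 1 ≤ ‖g j‖ := fun j => by simpa [hgz, hz1] using (g j).le_opNorm (z j)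
  have hg0 : ∀ j, ‖g j‖ ≠ 0 := fun j => (one_pos.trans_le (hg1 j)).ne'
  obtain ⟨f, hf1, hfx⟩ := exists_dual_vector'' ℝ (∑ i ∈ s, a i • v i)
  have hfg : ‖∑ j ∈ s, f (v j) • g j‖ ≤ C * K :=
    calc ‖∑ j ∈ s, f (v j) • g j‖ = ‖∑ j ∈ s, (‖g j‖ * f (v j)) • (‖g j‖⁻¹ • g j)‖ := by
          congr 1
          refine Finset.sum_congr rfl fun j _ => ?_
          rw [smul_smul, mul_comm _ (f (v j)), mul_assoc, mul_inv_cancel₀ (hg0 j), mul_one]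
      _ ≤ C * ‖∑ j ∈ s, (‖g j‖ * f (v j)) • vStar j‖ :=
          dominates_iff.1 (hD _ (hg.smul fun j => inv_ne_zero (hg0 j))
            fun j => norm_smul_inv_norm (norm_ne_zero_iff.1 (hg0 j))) s _
      _ ≤ C * (K * ‖∑ j ∈ s, f (v j) • vStar j‖) := by
          gcongr
          exact (hunc.biorthogonal htot hbi).norm_sum_mul_smul_le
            (by linarith [hg1 0, hgK 0]) (fun j => by rw [abs_norm]; exact hgK j) s _
      _ ≤ C * (K * 1) := by
          gcongr; exact (norm_sum_apply_smul_biorthogonal_le hunc htot hbi f s).trans hf1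
      _ = C * K := by ring
  calc ‖∑ i ∈ s, a i • v i‖ = (∑ j ∈ s, f (v j) • g j) (∑ i ∈ s, a i • z i) := by
        rw [sum_smul_apply_sum_smul_of_biorthogonal hgz, Finset.inter_self]
        simpa [map_sum, mul_comm] using hfx.symm
    _ ≤ ‖∑ j ∈ s, f (v j) • g j‖ * ‖∑ i ∈ s, a i • z i‖ :=
        (le_abs_self _).trans ((∑ j ∈ s, f (v j) • g j).le_opNorm _)
    _ ≤ C * K * ‖∑ i ∈ s, a i • z i‖ := by gcongr

end FDD

theorem statement2_general {Z V : Type*}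
    [NormedAddCommGroup Z] [NormedSpace ℝ Z] [CompleteSpace Z]
    [NormedAddCommGroup V] [NormedSpace ℝ V]
    (F : FDD Z) (v : ℕ → V) (hv : Is1UncondBasis v)
    (vStar : ℕ → StrongDual ℝ V)
    (hbi : ∀ i j, vStar i (v j) = if i = j then (1 : ℝ) else 0) :
    ((∃ C : ℝ, 1 ≤ C ∧ F.LowerEst C v) ↔
      (∃ C : ℝ, 1 ≤ C ∧ ∀ g : ℕ → StrongDual ℝ Z, F.IsDualBlockSeq g →
        (∀ j, ‖g j‖ = 1) → Dominates C vStar g)) ∧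
    (F.Bimonotone → ∀ C : ℝ, 1 ≤ C →
      (F.LowerEst C v ↔
        ∀ g : ℕ → StrongDual ℝ Z, F.IsDualBlockSeq g →
          (∀ j, ‖g j‖ = 1) → Dominates C vStar g)) := by
  obtain ⟨-, hunc, htot⟩ := hv
  obtain ⟨K, hK, hP⟩ := F.exists_norm_projIco_le
  have hK₀ : 0 ≤ K := zero_le_one.trans hK
  constructor
  · constructor
    · rintro ⟨C, hC, hL⟩
      exact ⟨C * K, one_le_mul_of_one_le_of_one_le hC hK,
        hL.dualUpperEst hunc hbi (by linarith) hK₀ hP⟩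
    · rintro ⟨C, hC, hD⟩
      exact ⟨C * K, one_le_mul_of_one_le_of_one_le hC hK,
        FDD.lowerEst_of_dualUpperEst hunc htot hbi hD (by linarith) hK₀ hP⟩
  · intro hbim C hC
    have hP₁ : ∀ (a b : ℕ) (z : Z), ‖F.projIco a b z‖ ≤ 1 * ‖z‖ := fun a b z => by
      simpa only [one_mul] using hbim a b z
    constructor
    · intro hL
      have := hL.dualUpperEst hunc hbi (by linarith) zero_le_one hP₁
      rwa [mul_one] at this
    · intro hD
      have := FDD.lowerEst_of_dualUpperEst hunc htot hbi hD (by linarith) zero_le_one hP₁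
      rwa [mul_one] at this

/-- `(E_i)` satisfies `V`-lower estimates in `Z` iff `(E_i^*)` satisfies
`V^(*)`-upper estimates in `Z^(*)`; moreover for bimonotone FDDs this holds constant by
constant. -/
theorem statement2 {Z V : Type*}
    [NormedAddCommGroup Z] [NormedSpace ℝ Z] [CompleteSpace Z]
    [NormedAddCommGroup V] [NormedSpace ℝ V] [CompleteSpace V]
    (F : FDD Z) (v : ℕ → V) (hv : Is1UncondBasis v)
    (vStar : ℕ → StrongDual ℝ V)
    (hbi : ∀ i j, vStar i (v j) = if i = j then (1 : ℝ) else 0) :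
    ((∃ C : ℝ, 1 ≤ C ∧ F.LowerEst C v) ↔
      (∃ C : ℝ, 1 ≤ C ∧ ∀ g : ℕ → StrongDual ℝ Z, F.IsDualBlockSeq g →
        (∀ j, ‖g j‖ = 1) → Dominates C vStar g)) ∧
    (F.Bimonotone → ∀ C : ℝ, 1 ≤ C →
      (F.LowerEst C v ↔
        ∀ g : ℕ → StrongDual ℝ Z, F.IsDualBlockSeq g →
          (∀ j, ‖g j‖ = 1) → Dominates C vStar g)) :=
  statement2_general F v hv vStar hbi
end
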